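/- arXiv:2503.02417 — 5 statements merged into one kernel-verified Lean document; each statement's English description precedes it below -/
import Mathlib

section
/- Let τ = e^{5πi/4} and define W : ℝ → ℂ by W(z) = (1/2)·( 1 + erf(η(z)/√2) + √(2/π)·(η(z)/(1+η(z)²))·e^{−η(z)²/2} ), where η(z) = e^{−iπ/8}·z. Then: Im τ < 0; W is infinitely differentiable on ℝ; W satisfies (τ − z²)²·W'(z) + i·(d³/dz³)[(τ − z²)·W(z)] = 0 for every z ∈ ℝ; W(z) → 0 as z → −∞; and W(z) → 1 as z → +∞. -/
open Complex Filter

/-- Straight-segment integral of a (typically entire) function from `a` to `b`. -/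
noncomputable def lineInt (f : ℂ → ℂ) (a b : ℂ) : ℂ :=
  ∫ t in (0:ℝ)..1, (b - a) * f (a + (t : ℂ) * (b - a))

/-- The Gauss error function on `ℂ`. -/
noncomputable def cerf (ζ : ℂ) : ℂ :=
  ((2 / Real.sqrt Real.pi : ℝ) : ℂ) * lineInt (fun ω => Complex.exp (-ω ^ 2)) 0 ζ

/-- The rotation `η(z) = e^{-iπ/8} z`. -/
noncomputable def ηrot (z : ℝ) : ℂ := Complex.exp (-(Complex.I * (Real.pi / 8 : ℝ))) * (z : ℂ)

/-- The function `W` of Corollary 1.3. -/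
noncomputable def Wfun (z : ℝ) : ℂ :=
  (1 / 2) * (1 + cerf (ηrot z / (Real.sqrt 2 : ℝ))
    + ((Real.sqrt (2 / Real.pi) : ℝ) : ℂ) * (ηrot z / (1 + ηrot z ^ 2))
      * Complex.exp (-(ηrot z) ^ 2 / 2))

section Aux
open MeasureTheory intervalIntegral Metric Topology
set_option maxHeartbeats 1000000

noncomputable def αc : ℂ := Complex.exp (-(Complex.I * (Real.pi / 8 : ℝ)))
noncomputable def bc : ℂ := αc ^ 2 / 2
noncomputable def Efun (z : ℝ) : ℂ := Complex.exp (-bc * (z:ℂ) ^ 2)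
noncomputable def gg (z : ℝ) : ℂ := ∫ u in (0:ℝ)..z, Efun u
noncomputable def Gfun (w : ℂ) : ℂ := ∫ t in (0:ℝ)..1, w * Complex.exp (-bc * ((t:ℂ) * w) ^ 2)
noncomputable def Cc : ℂ := ((Real.sqrt (2 / Real.pi) : ℝ) : ℂ) * αc
noncomputable def τc : ℂ := Complex.exp (Complex.I * (5 * Real.pi / 4 : ℝ))

lemma αc_ne : αc ≠ 0 := Complex.exp_ne_zero _

lemma hα2 : αc ^ 2 = Complex.exp (((-(Real.pi / 4) : ℝ) : ℂ) * Complex.I) := by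
  rw [αc, ← Complex.exp_nat_mul]
  congr 1
  push_cast
  ring

lemma bc_re : bc.re = Real.sqrt 2 / 4 := by
  have : bc = ((1/2 : ℝ) : ℂ) * Complex.exp (((-(Real.pi / 4) : ℝ) : ℂ) * Complex.I) := by
    rw [bc, hα2]; push_cast; ring
  rw [this, Complex.re_ofReal_mul, Complex.exp_ofReal_mul_I_re, Real.cos_neg,
    Real.cos_pi_div_four]
  ring

lemma bc_re_pos : 0 < bc.re := by
  rw [bc_re]; positivity

lemma α2_re : (αc ^ 2).re = Real.sqrt 2 / 2 := by
  rw [hα2, Complex.exp_ofReal_mul_I_re, Real.cos_neg, Real.cos_pi_div_four]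

lemma D_re (z : ℝ) : (1 + αc ^ 2 * (z:ℂ) ^ 2).re = 1 + Real.sqrt 2 / 2 * z ^ 2 := by
  have : (1 + αc ^ 2 * (z:ℂ) ^ 2) = 1 + ((z^2 : ℝ) : ℂ) * αc ^ 2 := by push_cast; ring
  rw [this, Complex.add_re, Complex.one_re, Complex.re_ofReal_mul, α2_re]
  ring

lemma D_ne (z : ℝ) : (1 + αc ^ 2 * (z:ℂ) ^ 2) ≠ 0 := by
  intro h
  have := D_re z
  rw [h] at this
  simp at this
  nlinarith [Real.sqrt_nonneg 2, sq_nonneg z]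

lemma Efun_cont : Continuous Efun := by
  unfold Efun; fun_prop

lemma hgg (z : ℝ) : HasDerivAt gg (Efun z) z := by
  refine intervalIntegral.integral_hasDerivAt_right
    (Efun_cont.intervalIntegrable _ _) ?_ Efun_cont.continuousAt
  exact Efun_cont.stronglyMeasurableAtFilter _ _

lemma Gfun_diff (x₀ : ℂ) : DifferentiableAt ℂ Gfun x₀ := by
  set R : ℝ := ‖x₀‖ + 1 with hR
  have hR0 : 0 < R := by positivity
  set M : ℝ := (1 + 2 * ‖bc‖ * R ^ 2) * Real.exp (‖bc‖ * R ^ 2) with hM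
  have hcont : ∀ x : ℂ, Continuous fun t : ℝ => x * Complex.exp (-bc * ((t:ℂ) * x) ^ 2) := by
    intro x; fun_prop
  have hnx : ∀ x ∈ ball x₀ 1, ‖x‖ ≤ R := by
    intro x hx
    rw [mem_ball, dist_eq_norm] at hx
    calc ‖x‖ = ‖x₀ + (x - x₀)‖ := by ring_nf
    _ ≤ ‖x₀‖ + ‖x - x₀‖ := norm_add_le _ _
    _ ≤ R := by rw [hR]; linarith
  have hder : ∀ (t : ℝ) (x : ℂ), HasDerivAt (fun x : ℂ => x * Complex.exp (-bc * ((t:ℂ) * x) ^ 2))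
      ((1 - 2 * bc * ((t:ℂ) * x) ^ 2) * Complex.exp (-bc * ((t:ℂ) * x) ^ 2)) x := by
    intro t x
    have h1 : HasDerivAt (fun x : ℂ => (t:ℂ) * x) (t:ℂ) x := by
      simpa using (hasDerivAt_id x).const_mul (t:ℂ)
    have h2 := ((h1.pow 2).const_mul (-bc)).cexp
    have h3 := (hasDerivAt_id x).mul h2
    refine h3.congr_deriv ?_
    simp only [id_eq, Pi.pow_apply]
    ring
  have hbound : ∀ᵐ t : ℝ, t ∈ Set.uIoc (0:ℝ) 1 → ∀ x ∈ ball x₀ 1,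
      ‖(1 - 2 * bc * ((t:ℂ) * x) ^ 2) * Complex.exp (-bc * ((t:ℂ) * x) ^ 2)‖ ≤ M := by
    refine ae_of_all _ fun t ht x hx => ?_
    have htt : |t| ≤ 1 := by
      rw [Set.uIoc_of_le (by norm_num : (0:ℝ) ≤ 1)] at ht
      rw [abs_le]; constructor <;> [linarith [ht.1]; exact ht.2]
    have hxR : ‖x‖ ≤ R := hnx x hx
    have hu : ‖(t:ℂ) * x‖ ≤ R := by
      rw [norm_mul, Complex.norm_real, Real.norm_eq_abs]
      calc |t| * ‖x‖ ≤ 1 * R := by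
            apply mul_le_mul htt hxR (norm_nonneg _) zero_le_one
      _ = R := one_mul R
    have hu2 : ‖((t:ℂ) * x) ^ 2‖ ≤ R ^ 2 := by
      rw [norm_pow]; exact pow_le_pow_left₀ (norm_nonneg _) hu 2
    have hexp : ‖Complex.exp (-bc * ((t:ℂ) * x) ^ 2)‖ ≤ Real.exp (‖bc‖ * R ^ 2) := by
      rw [Complex.norm_exp]
      apply Real.exp_le_exp.2
      calc (-bc * ((t:ℂ) * x) ^ 2).re ≤ ‖-bc * ((t:ℂ) * x) ^ 2‖ := Complex.re_le_norm _
      _ = ‖bc‖ * ‖((t:ℂ) * x) ^ 2‖ := by rw [norm_mul, norm_neg]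
      _ ≤ ‖bc‖ * R ^ 2 := by
          apply mul_le_mul_of_nonneg_left hu2 (norm_nonneg _)
    calc ‖(1 - 2 * bc * ((t:ℂ) * x) ^ 2) * Complex.exp (-bc * ((t:ℂ) * x) ^ 2)‖
        = ‖1 - 2 * bc * ((t:ℂ) * x) ^ 2‖ * ‖Complex.exp (-bc * ((t:ℂ) * x) ^ 2)‖ := norm_mul _ _
      _ ≤ (1 + 2 * ‖bc‖ * R ^ 2) * Real.exp (‖bc‖ * R ^ 2) := by
          apply mul_le_mul _ hexp (norm_nonneg _) (by positivity)
          calc ‖1 - 2 * bc * ((t:ℂ) * x) ^ 2‖ ≤ ‖(1:ℂ)‖ + ‖2 * bc * ((t:ℂ) * x) ^ 2‖ :=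
                norm_sub_le _ _
          _ = 1 + 2 * ‖bc‖ * ‖((t:ℂ) * x) ^ 2‖ := by
                rw [norm_one, norm_mul, norm_mul]; norm_num
          _ ≤ 1 + 2 * ‖bc‖ * R ^ 2 := by
                have := mul_le_mul_of_nonneg_left hu2 (by positivity : (0:ℝ) ≤ 2 * ‖bc‖)
                linarith
  have key := intervalIntegral.hasDerivAt_integral_of_dominated_loc_of_deriv_le
    (F := fun (w : ℂ) (t : ℝ) => w * Complex.exp (-bc * ((t:ℂ) * w) ^ 2))
    (F' := fun (w : ℂ) (t : ℝ) => (1 - 2 * bc * ((t:ℂ) * w) ^ 2) * Complex.exp (-bc * ((t:ℂ) * w) ^ 2))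
    (x₀ := x₀) (a := 0) (b := 1) (bound := fun _ => M) (s := ball x₀ 1) (ball_mem_nhds x₀ one_pos)
    (Eventually.of_forall fun x => (hcont x).aestronglyMeasurable)
    ((hcont x₀).intervalIntegrable _ _)
    (Continuous.aestronglyMeasurable (by fun_prop))
    hbound (intervalIntegrable_const) (ae_of_all _ fun t _ x _ => hder t x)
  exact key.2.differentiableAt

lemma Gfun_analytic : AnalyticOnNhd ℂ Gfun Set.univ :=
  DifferentiableOn.analyticOnNhd (fun w _ => (Gfun_diff w).differentiableWithinAt) isOpen_univ

lemma integral_scale (z : ℝ) (h : ℝ → ℂ) :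
    ∫ t in (0:ℝ)..1, (z:ℂ) * h (t * z) = ∫ u in (0:ℝ)..z, h u := by
  rw [intervalIntegral.integral_const_mul, ← Complex.real_smul,
    intervalIntegral.smul_integral_comp_mul_right h z]
  norm_num

lemma gg_eq_G (z : ℝ) : gg z = Gfun (z : ℂ) := by
  rw [Gfun, gg, ← integral_scale z Efun]
  congr 1
  ext t
  rw [Efun]
  push_cast
  ring_nf

lemma gg_analytic : AnalyticOnNhd ℝ gg Set.univ := by
  have h1 : AnalyticOnNhd ℝ (fun z : ℝ => Gfun (z:ℂ)) Set.univ :=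
    (Gfun_analytic.restrictScalars).comp
      (Complex.ofRealCLM.analyticOnNhd Set.univ) (Set.mapsTo_univ _ _)
  have : gg = fun z : ℝ => Gfun (z:ℂ) := funext gg_eq_G
  rw [this]; exact h1

lemma sqrt_fact : (2 / Real.sqrt Real.pi) / Real.sqrt 2 = Real.sqrt (2 / Real.pi) := by
  rw [Real.sqrt_div (by norm_num : (0:ℝ) ≤ 2)]
  have h2 := Real.mul_self_sqrt (by norm_num : (0:ℝ) ≤ 2)
  have hπ : Real.sqrt Real.pi ≠ 0 := ne_of_gt (Real.sqrt_pos.2 Real.pi_pos)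
  have hs2 : Real.sqrt 2 ≠ 0 := by positivity
  field_simp
  linear_combination -h2

lemma cerf_eq (z : ℝ) : cerf (ηrot z / (Real.sqrt 2 : ℝ)) = Cc * gg z := by
  have h1 : lineInt (fun ω => Complex.exp (-ω ^ 2)) 0 (ηrot z / (Real.sqrt 2 : ℝ))
      = (αc / (Real.sqrt 2 : ℝ)) * gg z := by
    rw [lineInt, gg, ← integral_scale z Efun, ← intervalIntegral.integral_const_mul]
    congr 1
    ext t
    rw [ηrot, Efun, ← αc]
    have h2 : ((t:ℂ) * ((αc * z) / (Real.sqrt 2:ℝ))) ^ 2 = bc * ((t*z:ℝ):ℂ) ^ 2 := by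
      rw [bc]
      have hs : ((Real.sqrt 2 : ℝ):ℂ) ^ 2 = 2 := by
        rw [← Complex.ofReal_pow, Real.sq_sqrt (by norm_num : (0:ℝ) ≤ 2)]
        norm_num
      field_simp
      rw [hs]; push_cast; ring
    rw [sub_zero, zero_add, h2]
    push_cast
    ring
  rw [cerf, h1, Cc]
  have h3 : ((2 / Real.sqrt Real.pi : ℝ) : ℂ) * (αc / (Real.sqrt 2 : ℝ))
      = ((Real.sqrt (2 / Real.pi) : ℝ) : ℂ) * αc := by
    rw [div_eq_mul_inv αc, ← mul_assoc, mul_comm (((2 / Real.sqrt Real.pi : ℝ) : ℂ)) αc,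
      mul_assoc, mul_comm αc]
    congr 1
    rw [← Complex.ofReal_inv, ← Complex.ofReal_mul, ← sqrt_fact]
    push_cast
    ring
  rw [← mul_assoc, h3]

lemma Wfun_eq (z : ℝ) : Wfun z
    = (1/2) * (1 + Cc * gg z + Cc * ((z:ℂ) * Efun z / (1 + αc ^ 2 * (z:ℂ) ^ 2))) := by
  rw [Wfun, cerf_eq, ηrot, ← αc, Efun, Cc]
  have h2 : -(αc * z) ^ 2 / 2 = -bc * (z:ℂ)^2 := by rw [bc]; ring
  rw [h2]
  ring

lemma hzc (z : ℝ) : HasDerivAt (fun z : ℝ => (z:ℂ)) 1 z := by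
  simpa using (hasDerivAt_id z).ofReal_comp

lemma hEd (z : ℝ) : HasDerivAt Efun (-αc ^ 2 * z * Efun z) z := by
  have h := (((hasDerivAt_pow 2 (z:ℂ)).const_mul (-bc)).cexp).comp_ofReal (z := z)
  refine h.congr_deriv ?_
  rw [Efun, bc]
  push_cast
  ring

lemma hWd (z : ℝ) :
    HasDerivAt Wfun (Cc * Efun z / (1 + αc ^ 2 * (z:ℂ) ^ 2) ^ 2) z := by
  have hfe : Wfun = fun z : ℝ =>
      (1/2) * (1 + Cc * gg z + Cc * ((z:ℂ) * Efun z / (1 + αc ^ 2 * (z:ℂ) ^ 2))) :=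
    funext Wfun_eq
  rw [hfe]
  have hNc : HasDerivAt (fun w : ℂ => w * Complex.exp (-bc * w ^ 2))
      (1 * Complex.exp (-bc * (z:ℂ) ^ 2)
        + (z:ℂ) * (Complex.exp (-bc * (z:ℂ) ^ 2) * (-bc * (2 * (z:ℂ) ^ 1)))) (z:ℂ) :=
    (hasDerivAt_id _).mul (((hasDerivAt_pow 2 (z:ℂ)).const_mul (-bc)).cexp)
  have hDc : HasDerivAt (fun w : ℂ => 1 + αc ^ 2 * w ^ 2)
      (αc ^ 2 * (2 * (z:ℂ) ^ 1)) (z:ℂ) :=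
    ((hasDerivAt_pow 2 (z:ℂ)).const_mul (αc ^ 2)).const_add 1
  have hQ := ((hNc.div hDc (D_ne z)).comp_ofReal (z := z)).const_mul Cc
  have h := ((((hgg z).const_mul Cc).const_add 1).add hQ).const_mul ((1:ℂ)/2)
  have hEz : Efun = fun z : ℝ => Complex.exp (-bc * (z:ℂ) ^ 2) := rfl
  rw [hEz]
  refine h.congr_deriv ?_
  simp only [hEz]
  rw [show bc = αc ^ 2 / 2 from rfl]
  field_simp [D_ne z]
  ring

lemma hτα : αc ^ 2 * τc = -1 := by
  rw [hα2, τc, ← Complex.exp_add]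
  have : ((-(Real.pi / 4) : ℝ) : ℂ) * Complex.I + Complex.I * ((5 * Real.pi / 4 : ℝ) : ℂ)
      = (Real.pi : ℂ) * Complex.I := by
    push_cast
    ring
  rw [this, Complex.exp_pi_mul_I]

lemma hτval : τc = -(αc ^ 2)⁻¹ := by
  have h := hτα
  have h2 : αc ^ 2 ≠ 0 := pow_ne_zero _ αc_ne
  have h3 : αc ≠ 0 := αc_ne
  field_simp
  linear_combination h

lemma hα4 : αc ^ 4 = -Complex.I := by
  have h : αc ^ 4 = (αc ^ 2) ^ 2 := by ring
  rw [h, hα2, ← Complex.exp_nat_mul]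
  have h2 : (2:ℕ) * (((-(Real.pi / 4) : ℝ) : ℂ) * Complex.I)
      = ((-(Real.pi / 2) : ℝ) : ℂ) * Complex.I := by
    push_cast
    ring
  rw [h2, Complex.exp_mul_I]
  push_cast
  rw [Complex.cos_neg, Complex.sin_neg, Complex.cos_pi_div_two, Complex.sin_pi_div_two]
  ring

noncomputable def Pfun (z : ℝ) : ℂ := (τc - (z:ℂ) ^ 2) * Wfun z
noncomputable def P1 (z : ℝ) : ℂ :=
  -(αc ^ 2)⁻¹ * (αc ^ 2 * ((z:ℂ) * (1 + Cc * gg z)) + Cc * Efun z)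
noncomputable def P2 (z : ℝ) : ℂ := -(1 + Cc * gg z)

lemma hα2_ne : αc ^ 2 ≠ 0 := pow_ne_zero _ αc_ne

lemma hPd (z : ℝ) : HasDerivAt Pfun (P1 z) z := by
  have hq : HasDerivAt (fun w : ℂ => τc - w ^ 2) (-(2 * (z:ℂ) ^ 1)) (z:ℂ) :=
    (hasDerivAt_pow 2 (z:ℂ)).neg.const_add τc
  have h := (hq.comp_ofReal (z := z)).mul (hWd z)
  have hPe : Pfun = fun z : ℝ => (τc - (z:ℂ) ^ 2) * Wfun z := rfl
  rw [hPe]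
  refine h.congr_deriv ?_
  rw [P1, Wfun_eq z, hτval]
  field_simp [D_ne z, hα2_ne, αc_ne, (show (1 + (z:ℂ) ^ 2 * αc ^ 2) ≠ 0 by rw [mul_comm]; exact D_ne z)]
  ring

lemma hP1d (z : ℝ) : HasDerivAt P1 (P2 z) z := by
  have hg1 : HasDerivAt (fun z : ℝ => 1 + Cc * gg z) (Cc * Efun z) z :=
    ((hgg z).const_mul Cc).const_add 1
  have hprod := ((hzc z).mul hg1).const_mul (αc ^ 2)
  have h := ((hprod.add ((hEd z).const_mul Cc)).const_mul (-(αc ^ 2)⁻¹))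
  have hP1e : P1 = fun z : ℝ =>
      -(αc ^ 2)⁻¹ * (αc ^ 2 * ((z:ℂ) * (1 + Cc * gg z)) + Cc * Efun z) := rfl
  rw [hP1e, P2]
  refine h.congr_deriv ?_
  field_simp [hα2_ne, αc_ne]
  ring

lemma hP2d (z : ℝ) : HasDerivAt P2 (-(Cc * Efun z)) z := by
  have h := (((hgg z).const_mul Cc).const_add 1).neg
  exact h

lemma iter3 (z : ℝ) : iteratedDeriv 3 Pfun z = -(Cc * Efun z) := by
  have h1 : deriv Pfun = P1 := funext fun z => (hPd z).deriv
  have h2 : deriv P1 = P2 := funext fun z => (hP1d z).deriv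
  rw [show (3:ℕ) = 2 + 1 from rfl, iteratedDeriv_succ,
    show (2:ℕ) = 1 + 1 from rfl, iteratedDeriv_succ, iteratedDeriv_one, h1, h2]
  exact (hP2d z).deriv

lemma ODE (z : ℝ) :
    (τc - (z:ℂ) ^ 2) ^ 2 * deriv Wfun z + Complex.I * iteratedDeriv 3 Pfun z = 0 := by
  rw [(hWd z).deriv, iter3 z, hτval]
  have h4 := hα4
  field_simp [D_ne z, hα2_ne, αc_ne]
  linear_combination ((Cc * Efun z) * (1 + αc ^ 2 * (z:ℂ) ^ 2) ^ 2) * Complex.I_sq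
    + (-(Cc * Efun z) * Complex.I * (1 + αc ^ 2 * (z:ℂ) ^ 2) ^ 2) * h4

lemma Efun_analytic : AnalyticOnNhd ℝ Efun Set.univ := by
  have hd : Differentiable ℂ (fun w : ℂ => Complex.exp (-bc * w ^ 2)) :=
    ((differentiable_pow 2).const_mul (-bc)).cexp
  have hc : AnalyticOnNhd ℂ (fun w : ℂ => Complex.exp (-bc * w ^ 2)) Set.univ :=
    DifferentiableOn.analyticOnNhd hd.differentiableOn isOpen_univ
  exact (hc.restrictScalars).comp (Complex.ofRealCLM.analyticOnNhd Set.univ)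
    (Set.mapsTo_univ _ _)

lemma Wfun_analytic : AnalyticOnNhd ℝ Wfun Set.univ := by
  have hfe : Wfun = fun z : ℝ =>
      (1/2) * (1 + Cc * gg z + Cc * ((z:ℂ) * Efun z / (1 + αc ^ 2 * (z:ℂ) ^ 2))) :=
    funext Wfun_eq
  rw [hfe]
  have hid : AnalyticOnNhd ℝ (fun z : ℝ => (z:ℂ)) Set.univ :=
    Complex.ofRealCLM.analyticOnNhd _
  have hD : AnalyticOnNhd ℝ (fun z : ℝ => 1 + αc ^ 2 * (z:ℂ) ^ 2) Set.univ :=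
    analyticOnNhd_const.add (analyticOnNhd_const.mul (hid.pow 2))
  exact analyticOnNhd_const.mul
    ((analyticOnNhd_const.add (analyticOnNhd_const.mul gg_analytic)).add
      (analyticOnNhd_const.mul ((hid.mul Efun_analytic).div hD fun z _ => D_ne z)))

noncomputable def Lc : ℂ := ((Real.pi : ℂ) / bc) ^ (1/2 : ℂ) / 2

lemma hgl_top : Tendsto gg atTop (𝓝 Lc) := by
  have hint : IntegrableOn (fun x : ℝ => Complex.exp (-bc * (x:ℂ) ^ 2)) (Set.Ioi 0) :=
    (integrable_cexp_neg_mul_sq bc_re_pos).integrableOn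
  have h := MeasureTheory.intervalIntegral_tendsto_integral_Ioi 0 hint tendsto_id
  rw [integral_gaussian_complex_Ioi bc_re_pos] at h
  exact h

lemma Efun_even (z : ℝ) : Efun (-z) = Efun z := by
  rw [Efun, Efun]; push_cast; ring_nf

lemma gg_odd (z : ℝ) : gg (-z) = -gg z := by
  have h : (∫ x in (0:ℝ)..z, Efun (-x)) = ∫ x in (-z)..(-(0:ℝ)), Efun x :=
    intervalIntegral.integral_comp_neg Efun
  rw [neg_zero] at h
  simp only [Efun_even] at h
  rw [gg, gg, h]
  exact intervalIntegral.integral_symm (-z) 0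

lemma hgl_bot : Tendsto gg atBot (𝓝 (-Lc)) := by
  have h := (hgl_top.comp tendsto_neg_atBot_atTop).neg
  have hfe : (fun x : ℝ => -(gg ∘ Neg.neg) x) = gg := funext fun z => by
    simp [Function.comp, gg_odd]
  rwa [hfe] at h
  
lemma pi_div_bc : (Real.pi : ℂ) / bc
    = Complex.exp (((Real.log (2*Real.pi) : ℝ) : ℂ) + ((Real.pi/4 : ℝ) : ℂ) * Complex.I) := by
  have hb : bc = Complex.exp (((-(Real.pi/4) : ℝ) : ℂ) * Complex.I) / 2 := by rw [bc, hα2]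
  rw [hb, Complex.exp_add]
  have h1 : Complex.exp ((Real.log (2*Real.pi) : ℝ) : ℂ) = ((2*Real.pi : ℝ) : ℂ) := by
    rw [← Complex.ofReal_exp, Real.exp_log (by positivity)]
  have h2 : Complex.exp (((Real.pi/4 : ℝ) : ℂ) * Complex.I)
      = (Complex.exp (((-(Real.pi/4) : ℝ) : ℂ) * Complex.I))⁻¹ := by
    rw [← Complex.exp_neg]
    congr 1
    push_cast
    ring
  rw [h1, h2]
  rw [div_div_eq_mul_div, div_eq_mul_inv]
  push_cast
  ring

lemma cpow_val : ((Real.pi : ℂ) / bc) ^ (1/2 : ℂ)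
    = ((Real.sqrt (2*Real.pi) : ℝ) : ℂ) * αc⁻¹ := by
  set w : ℂ := ((Real.log (2*Real.pi) : ℝ) : ℂ) + ((Real.pi/4 : ℝ) : ℂ) * Complex.I with hw
  have him : w.im = Real.pi/4 := by simp [hw]
  rw [pi_div_bc, Complex.cpow_def_of_ne_zero (Complex.exp_ne_zero _),
    Complex.log_exp (by rw [him]; linarith [Real.pi_pos]) (by rw [him]; linarith [Real.pi_pos]),
    show w * (1/2 : ℂ) = ((Real.log (2*Real.pi)/2 : ℝ) : ℂ) + ((Real.pi/8 : ℝ):ℂ) * Complex.I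
      from by rw [hw]; push_cast; ring,
    Complex.exp_add]
  congr 1
  · rw [← Complex.ofReal_exp]
    congr 1
    rw [Real.sqrt_eq_rpow, Real.rpow_def_of_pos (by positivity)]
    ring_nf
  · rw [αc, ← Complex.exp_neg]
    congr 1
    push_cast
    ring

lemma sqrt_prod : Real.sqrt (2/Real.pi) * Real.sqrt (2*Real.pi) = 2 := by
  rw [← Real.sqrt_mul (by positivity)]
  rw [show 2/Real.pi * (2*Real.pi) = 4 from by field_simp; ring]
  rw [show (4:ℝ) = 2^2 from by norm_num, Real.sqrt_sq (by norm_num)]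

lemma hCL : Cc * Lc = 1 := by
  rw [Cc, Lc, cpow_val]
  have hs : ((Real.sqrt (2/Real.pi) : ℝ) : ℂ) * ((Real.sqrt (2*Real.pi) : ℝ) : ℂ) = 2 := by
    rw [← Complex.ofReal_mul, sqrt_prod]
    norm_num
  have hinv : αc * αc⁻¹ = 1 := mul_inv_cancel₀ αc_ne
  calc ((Real.sqrt (2/Real.pi) : ℝ) : ℂ) * αc
        * (((Real.sqrt (2*Real.pi) : ℝ) : ℂ) * αc⁻¹ / 2)
      = (((Real.sqrt (2/Real.pi) : ℝ) : ℂ) * ((Real.sqrt (2*Real.pi) : ℝ) : ℂ))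
        * (αc * αc⁻¹) / 2 := by ring
  _ = 1 := by rw [hs, hinv]; norm_num

lemma tail_bound (z : ℝ) : ‖(z:ℂ) * Efun z / (1 + αc^2*(z:ℂ)^2)‖
    ≤ |z| * Real.exp (-(Real.sqrt 2/4) * z^2) := by
  have hE : ‖Efun z‖ = Real.exp (-(Real.sqrt 2/4) * z^2) := by
    rw [Efun, Complex.norm_exp]
    congr 1
    have h : (-bc * (z:ℂ)^2) = ((z^2:ℝ):ℂ) * (-bc) := by push_cast; ring
    rw [h, Complex.re_ofReal_mul, Complex.neg_re, bc_re]
    ring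
  have hD1 : (1:ℝ) ≤ ‖1 + αc^2*(z:ℂ)^2‖ := by
    calc (1:ℝ) ≤ (1 + αc^2*(z:ℂ)^2).re := by
          rw [D_re]
          nlinarith [Real.sqrt_nonneg 2, sq_nonneg z]
    _ ≤ |(1 + αc^2*(z:ℂ)^2).re| := le_abs_self _
    _ ≤ ‖1 + αc^2*(z:ℂ)^2‖ := Complex.abs_re_le_norm _
  rw [norm_div, norm_mul, Complex.norm_real, Real.norm_eq_abs, hE]
  calc |z| * Real.exp (-(Real.sqrt 2/4) * z^2) / ‖1 + αc^2*(z:ℂ)^2‖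
      ≤ |z| * Real.exp (-(Real.sqrt 2/4) * z^2) / 1 := by
        apply div_le_div_of_nonneg_left ?_ ?_ hD1
        · positivity
        · norm_num
  _ = |z| * Real.exp (-(Real.sqrt 2/4) * z^2) := by norm_num

lemma bound_top : Tendsto (fun z : ℝ => |z| * Real.exp (-(Real.sqrt 2/4) * z^2))
    atTop (𝓝 0) := by
  set k : ℝ := Real.sqrt 2/4 with hk
  have hk0 : 0 < k := by rw [hk]; positivity
  have h1 : Tendsto (fun x : ℝ => x ^ 1 * Real.exp (-x)) atTop (𝓝 0) :=
    Real.tendsto_pow_mul_exp_neg_atTop_nhds_zero 1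
  have h2 : Tendsto (fun z : ℝ => k * z^2) atTop atTop :=
    (tendsto_pow_atTop two_ne_zero).const_mul_atTop hk0
  have h3 := (h1.comp h2).const_mul (1/k)
  rw [mul_zero] at h3
  apply squeeze_zero' (Eventually.of_forall fun z => by positivity) ?_ h3
  filter_upwards [eventually_ge_atTop (1:ℝ)] with z hz
  have hz0 : (0:ℝ) ≤ z := by linarith
  have habs : |z| = z := abs_of_nonneg hz0
  have hz2 : z ≤ z^2 := by nlinarith
  calc |z| * Real.exp (-(Real.sqrt 2/4) * z^2)
      = z * Real.exp (-(k * z^2)) := by rw [habs, hk]; ring_nf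
  _ ≤ z^2 * Real.exp (-(k * z^2)) := by
      apply mul_le_mul_of_nonneg_right hz2 (Real.exp_nonneg _)
  _ = 1/k * ((fun x : ℝ => x ^ 1 * Real.exp (-x)) ((fun z : ℝ => k * z^2) z)) := by
      field_simp
  _ = _ := rfl

lemma bound_bot : Tendsto (fun z : ℝ => |z| * Real.exp (-(Real.sqrt 2/4) * z^2))
    atBot (𝓝 0) := by
  have h := bound_top.comp tendsto_neg_atBot_atTop
  have hfe : ((fun z : ℝ => |z| * Real.exp (-(Real.sqrt 2/4) * z^2)) ∘ Neg.neg)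
      = fun z : ℝ => |z| * Real.exp (-(Real.sqrt 2/4) * z^2) := by
    funext z
    simp [Function.comp, abs_neg, neg_sq]
  rwa [hfe] at h

lemma tail_top : Tendsto (fun z : ℝ => (z:ℂ) * Efun z / (1 + αc^2*(z:ℂ)^2)) atTop (𝓝 0) :=
  squeeze_zero_norm tail_bound bound_top

lemma tail_bot : Tendsto (fun z : ℝ => (z:ℂ) * Efun z / (1 + αc^2*(z:ℂ)^2)) atBot (𝓝 0) :=
  squeeze_zero_norm tail_bound bound_bot

end Aux

open Topology in
theorem statement1 :
    (Complex.exp (Complex.I * (5 * Real.pi / 4 : ℝ))).im < 0 ∧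
    ContDiff ℝ (⊤ : ℕ∞) Wfun ∧
    (∀ z : ℝ,
      (Complex.exp (Complex.I * (5 * Real.pi / 4 : ℝ)) - (z : ℂ) ^ 2) ^ 2 * deriv Wfun z
        + Complex.I * iteratedDeriv 3
            (fun w : ℝ =>
              (Complex.exp (Complex.I * (5 * Real.pi / 4 : ℝ)) - (w : ℂ) ^ 2) * Wfun w) z
        = 0) ∧
    Tendsto Wfun atBot (nhds 0) ∧
    Tendsto Wfun atTop (nhds 1) := by
  refine ⟨?_, ?_, ?_, ?_, ?_⟩
  · rw [mul_comm Complex.I, Complex.exp_ofReal_mul_I_im,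
      show 5 * Real.pi / 4 = Real.pi/4 + Real.pi from by ring, Real.sin_add_pi,
      Real.sin_pi_div_four]
    have : (0:ℝ) < Real.sqrt 2 / 2 := by positivity
    linarith
  · exact Wfun_analytic.contDiff
  · exact fun z => ODE z
  · have hfe : Wfun = fun z : ℝ =>
        (1/2) * (1 + Cc * gg z + Cc * ((z:ℂ) * Efun z / (1 + αc ^ 2 * (z:ℂ) ^ 2))) :=
      funext Wfun_eq
    rw [hfe]
    have h := (((hgl_bot.const_mul Cc).const_add 1).add (tail_bot.const_mul Cc)).const_mul
      ((1:ℂ)/2)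
    have he : (1:ℂ)/2 * (1 + Cc * -Lc + Cc * 0) = 0 := by
      linear_combination (-(1:ℂ)/2) * hCL
    rwa [he] at h
  · have hfe : Wfun = fun z : ℝ =>
        (1/2) * (1 + Cc * gg z + Cc * ((z:ℂ) * Efun z / (1 + αc ^ 2 * (z:ℂ) ^ 2))) :=
      funext Wfun_eq
    rw [hfe]
    have h := (((hgl_top.const_mul Cc).const_add 1).add (tail_top.const_mul Cc)).const_mul
      ((1:ℂ)/2)
    have he : (1:ℂ)/2 * (1 + Cc * Lc + Cc * 0) = 1 := by
      linear_combination ((1:ℂ)/2) * hCL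
    rwa [he] at h
end

section
/- For every μ ∈ ℂ and every η ∈ ℂ the following two power-series identities hold: ∑_{n=0}^∞ ((μ − 2n)/n!)·((−(μ+1)/4)_n/((1/2)_n))·η^{2n} = μ·M(−(μ+1)/4, 1/2, η²) + (μ+1)·η²·M((3−μ)/4, 3/2, η²), and η + (1/4)·∑_{n=1}^∞ ((2n+1−μ)/n!)·(((5−μ)/4)_{n−1}/((3/2)_n))·η^{2n+1} = η·M((1−μ)/4, 3/2, η²) + (η³/3)·M((5−μ)/4, 5/2, η²). -/
open Complex

/-- Rising Pochhammer symbol in `ℂ`. -/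
noncomputable def pochC (x : ℂ) (n : ℕ) : ℂ := ∏ i ∈ Finset.range n, (x + (i : ℂ))

/-- Kummer's confluent hypergeometric function of the first kind. -/
noncomputable def kummerM (a c ζ : ℂ) : ℂ :=
  ∑' n : ℕ, pochC a n / pochC c n * ζ ^ n / (n.factorial : ℂ)

/-!
Both identities are termwise. Writing `t(a, c; n) = (a)ₙ/(c)ₙ ζⁿ/n!`, the shift
`t(a, c; n + 1) = a ζ / (c (n + 1)) · t(a + 1, c + 1; n)` rewrites the `(n + 1)`-st term of each
left-hand series as a combination of `t(a, c; n + 1)` and `t(a + 1, c + 1; n)`; summing, using that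
Kummer series converge everywhere by the ratio test, gives the two right-hand sides.
-/

noncomputable def kummerTerm (a c ζ : ℂ) (n : ℕ) : ℂ :=
  pochC a n / pochC c n * ζ ^ n / (n.factorial : ℂ)

lemma kummerM_eq_tsum_kummerTerm (a c ζ : ℂ) : kummerM a c ζ = ∑' n, kummerTerm a c ζ n := rfl

lemma pochC_zero (x : ℂ) : pochC x 0 = 1 := Finset.prod_range_zero _

lemma pochC_succ (x : ℂ) (n : ℕ) : pochC x (n + 1) = pochC x n * (x + n) :=
  Finset.prod_range_succ _ _

lemma pochC_succ' (x : ℂ) (n : ℕ) : pochC x (n + 1) = x * pochC (x + 1) n := by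
  rw [pochC, Finset.prod_range_succ', mul_comm, pochC]
  congr 1
  · simp
  · exact Finset.prod_congr rfl fun i _ => by push_cast; ring

lemma kummerTerm_zero (a c ζ : ℂ) : kummerTerm a c ζ 0 = 1 := by
  simp [kummerTerm, pochC_zero]

lemma kummerTerm_succ (a c ζ : ℂ) (n : ℕ) :
    kummerTerm a c ζ (n + 1) = kummerTerm a c ζ n * ((a + n) * ζ / ((c + n) * (n + 1))) := by
  simp only [kummerTerm, pochC_succ, pow_succ, Nat.factorial_succ, Nat.cast_mul, Nat.cast_succ,
    div_eq_mul_inv, mul_inv]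
  ring

lemma kummerTerm_succ' (a c ζ : ℂ) (n : ℕ) :
    kummerTerm a c ζ (n + 1) = a * ζ / (c * (n + 1)) * kummerTerm (a + 1) (c + 1) ζ n := by
  simp only [kummerTerm, pochC_succ', pow_succ, Nat.factorial_succ, Nat.cast_mul, Nat.cast_succ,
    div_eq_mul_inv, mul_inv]
  ring

lemma tendsto_kummerTerm_ratio (a c ζ : ℂ) :
    Filter.Tendsto (fun n : ℕ => (a + n) * ζ / ((c + n) * (n + 1))) Filter.atTop (nhds 0) := by
  have h₁ := tendsto_add_mul_div_add_mul_atTop_nhds a c 1 one_ne_zero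
  have h₂ := tendsto_add_mul_div_add_mul_atTop_nhds ζ 1 0 one_ne_zero
  simpa [mul_div_mul_comm, add_comm (1 : ℂ)] using h₁.mul h₂

-- No condition on `c`: for `c ∈ -ℕ` the terms are eventually `x / 0 = 0`.
lemma summable_kummerTerm (a c ζ : ℂ) : Summable (kummerTerm a c ζ) := by
  refine summable_of_ratio_norm_eventually_le (r := 1 / 2) (by norm_num) ?_
  have hsmall := (tendsto_kummerTerm_ratio a c ζ).norm.eventually_le_const
    (show ‖(0 : ℂ)‖ < 1 / 2 by norm_num)
  filter_upwards [hsmall] with n hn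
  rw [kummerTerm_succ, norm_mul, mul_comm]
  exact mul_le_mul_of_nonneg_right hn (norm_nonneg _)

section ShiftedSums

variable {R : Type*} [Ring R] [TopologicalSpace R] [IsTopologicalRing R]
  {f g : ℕ → R} {s t : R}

lemma hasSum_mul_shift_add_mul (hf : HasSum f s) (hg : HasSum g t) (α β : R) :
    HasSum (fun n => α * f (n + 1) + β * g n) (α * (s - f 0) + β * t) := by
  have hf' : HasSum (fun n => f (n + 1)) (s - f 0) := by
    simpa using (hasSum_nat_add_iff' 1).mpr hf
  exact (hf'.mul_left α).add (hg.mul_left β)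

lemma hasSum_of_eq_mul_add_mul_shift {F : ℕ → R} (hf : HasSum f s) (hg : HasSum g t) (α β : R)
    (h₀ : F 0 = α * f 0) (hsucc : ∀ n, F (n + 1) = α * f (n + 1) + β * g n) :
    HasSum F (α * s + β * t) := by
  have hF := ((hasSum_mul_shift_add_mul hf hg α β).congr_fun hsucc).zero_add
  rwa [h₀, mul_sub, sub_add_eq_add_sub, add_sub_cancel] at hF

end ShiftedSums

lemma evenSeries_term_succ (μ η : ℂ) (n : ℕ) :
    (μ - 2 * ((n + 1 : ℕ) : ℂ)) / ((n + 1).factorial : ℂ)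
        * (pochC (-(μ + 1) / 4) (n + 1) / pochC (1 / 2) (n + 1)) * η ^ (2 * (n + 1))
      = μ * kummerTerm (-(μ + 1) / 4) (1 / 2) (η ^ 2) (n + 1)
        + (μ + 1) * η ^ 2 * kummerTerm ((3 - μ) / 4) (3 / 2) (η ^ 2) n := by
  have hn : (n : ℂ) + 1 ≠ 0 := Nat.cast_add_one_ne_zero n
  have hterm : (μ - 2 * ((n + 1 : ℕ) : ℂ)) / ((n + 1).factorial : ℂ)
        * (pochC (-(μ + 1) / 4) (n + 1) / pochC (1 / 2) (n + 1)) * η ^ (2 * (n + 1))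
      = (μ - 2 * (n + 1)) * kummerTerm (-(μ + 1) / 4) (1 / 2) (η ^ 2) (n + 1) := by
    rw [kummerTerm, pow_mul]; push_cast; ring
  -- the factor `-2 (n + 1)` cancels against `a / (c (n + 1))`, leaving `-4a = μ + 1`
  rw [hterm, kummerTerm_succ', show -(μ + 1) / 4 + 1 = (3 - μ) / 4 by ring,
    show (1 / 2 : ℂ) + 1 = 3 / 2 by norm_num]
  field_simp
  ring

lemma oddSeries_term (μ η : ℂ) (n : ℕ) :
    1 / 4 * ((2 * ((n : ℂ) + 1) + 1 - μ) / ((n + 1).factorial : ℂ)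
        * (pochC ((5 - μ) / 4) n / pochC (3 / 2) (n + 1)) * η ^ (2 * (n + 1) + 1))
      = η * kummerTerm ((1 - μ) / 4) (3 / 2) (η ^ 2) (n + 1)
        + η ^ 3 / 3 * kummerTerm ((5 - μ) / 4) (5 / 2) (η ^ 2) n := by
  have hn : (n : ℂ) + 1 ≠ 0 := Nat.cast_add_one_ne_zero n
  have hpoch : pochC (3 / 2) (n + 1) = 3 / 2 * pochC (5 / 2) n := by
    rw [pochC_succ']; norm_num
  rw [kummerTerm_succ', show (1 - μ) / 4 + 1 = (5 - μ) / 4 by ring,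
    show (3 / 2 : ℂ) + 1 = 5 / 2 by norm_num, kummerTerm, hpoch, Nat.factorial_succ,
    pow_succ, pow_mul]
  push_cast
  field_simp
  ring

theorem statement4 (μ η : ℂ) :
    (∑' n : ℕ, (μ - 2 * (n : ℂ)) / (n.factorial : ℂ)
        * (pochC (-(μ + 1) / 4) n / pochC (1 / 2) n) * η ^ (2 * n)
      = μ * kummerM (-(μ + 1) / 4) (1 / 2) (η ^ 2)
        + (μ + 1) * η ^ 2 * kummerM ((3 - μ) / 4) (3 / 2) (η ^ 2)) ∧
    (η + (1 / 4) * ∑' n : ℕ,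
        (2 * ((n : ℂ) + 1) + 1 - μ) / ((n + 1).factorial : ℂ)
          * (pochC ((5 - μ) / 4) n / pochC (3 / 2) (n + 1)) * η ^ (2 * (n + 1) + 1)
      = η * kummerM ((1 - μ) / 4) (3 / 2) (η ^ 2)
        + η ^ 3 / 3 * kummerM ((5 - μ) / 4) (5 / 2) (η ^ 2)) := by
  simp only [kummerM_eq_tsum_kummerTerm]
  constructor
  · refine HasSum.tsum_eq (hasSum_of_eq_mul_add_mul_shift
      (summable_kummerTerm _ _ _).hasSum (summable_kummerTerm _ _ _).hasSum _ _ ?_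
      (evenSeries_term_succ μ η))
    simp [pochC_zero, kummerTerm_zero]
  · have h := hasSum_mul_shift_add_mul (summable_kummerTerm ((1 - μ) / 4) (3 / 2) (η ^ 2)).hasSum
      (summable_kummerTerm ((5 - μ) / 4) (5 / 2) (η ^ 2)).hasSum η (η ^ 3 / 3)
    rw [← tsum_mul_left, (h.congr_fun (oddSeries_term μ η)).tsum_eq, kummerTerm_zero]
    ring
end

section
/- Let μ ∈ ℂ and A_μ = {η ∈ ℂ : η² = μ}. A function Y : ℂ∖A_μ → ℂ, complex differentiable to second order on ℂ∖A_μ, satisfies (μ−η²)·Y''(η) − 6η·Y'(η) + ((μ−η²)² − 6)·Y(η) = 0 for all η ∈ ℂ∖A_μ if and only if the function R : ℂ∖A_μ → ℂ defined by R(η) = e^{η²/2}·(μ−η²)²·Y(η) (equivalently, Y(η) = (e^{−η²/2}/(μ−η²)²)·R(η)) satisfies (μ−η²)·R''(η) − 2η·(μ−1−η²)·R'(η) + (μ+1)·(μ−2−η²)·R(η) = 0 for all η ∈ ℂ∖A_μ. -/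
/-! The substitution `R = g Y` with `g(η) = e^{η²/2} (μ - η²)²` conjugates the two differential
operators: a direct computation with the Leibniz rule shows that the `R`-operator applied to `g Y`
is `g` times the `Y`-operator applied to `Y`. Since `g` does not vanish off `A_μ`, the two
equations hold at the same points. -/

open Complex Filter Topology

section SecondDerivative

variable {𝕜 : Type*} [NontriviallyNormedField 𝕜] {f g : 𝕜 → 𝕜} {x : 𝕜}

theorem deriv_deriv_mul (hf : ∀ᶠ y in 𝓝 x, DifferentiableAt 𝕜 f y)
    (hg : ∀ᶠ y in 𝓝 x, DifferentiableAt 𝕜 g y)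
    (hf' : DifferentiableAt 𝕜 (deriv f) x) (hg' : DifferentiableAt 𝕜 (deriv g) x) :
    deriv (deriv (f * g)) x =
      deriv (deriv f) x * g x + 2 * (deriv f x * deriv g x) + f x * deriv (deriv g) x := by
  have hderiv : deriv (f * g) =ᶠ[𝓝 x] deriv f * g + f * deriv g := by
    filter_upwards [hf, hg] with y hfy hgy
    exact deriv_mul hfy hgy
  have hsum := (hf'.hasDerivAt.mul hg.self_of_nhds.hasDerivAt).add
    (hf.self_of_nhds.hasDerivAt.mul hg'.hasDerivAt)
  rw [hderiv.deriv_eq, hsum.deriv]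
  ring

end SecondDerivative

noncomputable def gaugeFactor (μ w : ℂ) : ℂ := exp (w ^ 2 / 2) * (μ - w ^ 2) ^ 2

theorem gaugeFactor_ne_zero {μ w : ℂ} (hw : w ^ 2 ≠ μ) : gaugeFactor μ w ≠ 0 :=
  mul_ne_zero (exp_ne_zero _) (pow_ne_zero _ (sub_ne_zero.mpr hw.symm))

theorem hasDerivAt_gaugeFactor (μ w : ℂ) :
    HasDerivAt (gaugeFactor μ)
      (exp (w ^ 2 / 2) * (w * (μ - w ^ 2) * (μ - w ^ 2 - 4))) w := by
  have hexp := ((hasDerivAt_pow 2 w).div_const 2).cexp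
  have hsq := ((hasDerivAt_pow 2 w).const_sub μ).fun_pow 2
  refine (hexp.mul hsq).congr_deriv ?_
  push_cast
  ring

theorem deriv_gaugeFactor (μ : ℂ) :
    deriv (gaugeFactor μ) = fun w ↦ exp (w ^ 2 / 2) * (w * (μ - w ^ 2) * (μ - w ^ 2 - 4)) :=
  funext fun w ↦ (hasDerivAt_gaugeFactor μ w).deriv

theorem hasDerivAt_deriv_gaugeFactor (μ w : ℂ) :
    HasDerivAt (deriv (gaugeFactor μ))
      (exp (w ^ 2 / 2) *
        ((1 + w ^ 2) * (μ - w ^ 2) * (μ - w ^ 2 - 4) - 4 * w ^ 2 * (μ - w ^ 2 - 2))) w := by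
  rw [deriv_gaugeFactor]
  have hexp := ((hasDerivAt_pow 2 w).div_const 2).cexp
  have hu := (hasDerivAt_pow 2 w).const_sub μ
  refine (hexp.fun_mul (((hasDerivAt_id' w).fun_mul hu).fun_mul (hu.sub_const 4))).congr_deriv ?_
  push_cast
  ring

theorem gaugeFactor_mul_conjugates {μ η : ℂ} {Y : ℂ → ℂ}
    (hY : ∀ᶠ w in 𝓝 η, DifferentiableAt ℂ Y w) (hY' : DifferentiableAt ℂ (deriv Y) η) :
    (μ - η ^ 2) * deriv (deriv (gaugeFactor μ * Y)) η
        - 2 * η * (μ - 1 - η ^ 2) * deriv (gaugeFactor μ * Y) η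
        + (μ + 1) * (μ - 2 - η ^ 2) * (gaugeFactor μ η * Y η) =
      gaugeFactor μ η * ((μ - η ^ 2) * deriv (deriv Y) η - 6 * η * deriv Y η
        + ((μ - η ^ 2) ^ 2 - 6) * Y η) := by
  have hg : ∀ᶠ w in 𝓝 η, DifferentiableAt ℂ (gaugeFactor μ) w :=
    Eventually.of_forall fun w ↦ (hasDerivAt_gaugeFactor μ w).differentiableAt
  rw [deriv_deriv_mul hg hY (hasDerivAt_deriv_gaugeFactor μ η).differentiableAt hY',
    deriv_mul hg.self_of_nhds hY.self_of_nhds, (hasDerivAt_deriv_gaugeFactor μ η).deriv,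
    deriv_gaugeFactor, gaugeFactor]
  ring

theorem statement5 (μ : ℂ) (Y : ℂ → ℂ)
    (hY1 : ∀ η : ℂ, η ^ 2 ≠ μ → DifferentiableAt ℂ Y η)
    (hY2 : ∀ η : ℂ, η ^ 2 ≠ μ → DifferentiableAt ℂ (deriv Y) η) :
    (∀ η : ℂ, η ^ 2 ≠ μ →
        (μ - η ^ 2) * deriv (deriv Y) η - 6 * η * deriv Y η
          + ((μ - η ^ 2) ^ 2 - 6) * Y η = 0) ↔
    (∀ η : ℂ, η ^ 2 ≠ μ →
        (μ - η ^ 2) *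
            deriv (deriv (fun w : ℂ => Complex.exp (w ^ 2 / 2) * (μ - w ^ 2) ^ 2 * Y w)) η
          - 2 * η * (μ - 1 - η ^ 2) *
            deriv (fun w : ℂ => Complex.exp (w ^ 2 / 2) * (μ - w ^ 2) ^ 2 * Y w) η
          + (μ + 1) * (μ - 2 - η ^ 2) *
            (Complex.exp (η ^ 2 / 2) * (μ - η ^ 2) ^ 2 * Y η) = 0) := by
  have hopen : IsOpen {w : ℂ | w ^ 2 ≠ μ} := isOpen_ne.preimage (continuous_pow 2)
  refine forall₂_congr fun η hη ↦ ?_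
  have hY : ∀ᶠ w in 𝓝 η, DifferentiableAt ℂ Y w :=
    eventually_of_mem (hopen.mem_nhds hη) hY1
  change _ ↔ (μ - η ^ 2) * deriv (deriv (gaugeFactor μ * Y)) η
      - 2 * η * (μ - 1 - η ^ 2) * deriv (gaugeFactor μ * Y) η
      + (μ + 1) * (μ - 2 - η ^ 2) * (gaugeFactor μ η * Y η) = 0
  rw [gaugeFactor_mul_conjugates hY (hY2 η hη), mul_eq_zero,
    or_iff_right (gaugeFactor_ne_zero hη)]
end

section
/- Let μ ∈ ℂ, let r > 0, and let (a_n)_{n≥0} and (b_n)_{n≥0} be sequences in ℂ such that the power series R₁(η) = ∑_{n=0}^∞ a_n·η^{2n} and R₂(η) = ∑_{n=0}^∞ b_n·η^{2n+1} converge for all |η| < r. Then R₁ satisfies (μ−η²)·R₁''(η) − 2η·(μ−1−η²)·R₁'(η) + (μ+1)·(μ−2−η²)·R₁(η) = 0 for all |η| < r if and only if 2μ·a₁ + (μ²−μ−2)·a₀ = 0 and, for every n ≥ 1, 2μ·(2n²+3n+1)·a_{n+1} − (4n² + (4μ−6)·n − μ² + μ + 2)·a_n + (4n − 5 − μ)·a_{n−1}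 = 0. Likewise, R₂ satisfies the same differential equation for all |η| < r if and only if 6μ·b₁ + (μ²−3μ)·b₀ = 0 and, for every n ≥ 1, 2μ·(2n²+5n+3)·b_{n+1} − (4n² + (4μ−2)·n − μ² + 3μ)·b_n + (4n − 3 − μ)·b_{n−1} = 0. -/
/-!
Write the series as `∑ c k * η ^ k` with `c` supported on the even (resp. odd) indices. Inside
the disc of convergence the series may be differentiated termwise, so the left-hand side of the
equation is again a power series, whose `k`-th coefficient is a three-term expression in
`c k`, `c (k + 2)` and `c (k - 2)`. By the identity theorem it vanishes on the disc iff all these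
coefficients vanish. Coefficients of the wrong parity vanish automatically, and the remaining
ones are exactly the stated recurrences.
-/

open Function FormalMultilinearSeries

section ExtendedCoefficients

variable {g : ℕ → ℕ} {a : ℕ → ℂ} {η : ℂ}

theorem extend_mul_pow_eq (hg : Injective g) :
    (fun k => extend g a 0 k * η ^ k) = extend g (fun n => a n * η ^ g n) 0 := by
  funext k
  by_cases hk : ∃ n, g n = k
  · obtain ⟨n, rfl⟩ := hk
    simp only [hg.extend_apply]
  · simp only [extend_apply' _ _ _ hk, Pi.zero_apply, zero_mul]

theorem hasSum_extend_mul_pow_iff (hg : Injective g) {S : ℂ} :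
    HasSum (fun k => extend g a 0 k * η ^ k) S ↔ HasSum (fun n => a n * η ^ g n) S := by
  rw [extend_mul_pow_eq hg, hasSum_extend_zero hg]

theorem summable_extend_mul_pow_iff (hg : Injective g) :
    Summable (fun k => extend g a 0 k * η ^ k) ↔ Summable (fun n => a n * η ^ g n) := by
  rw [extend_mul_pow_eq hg, summable_extend_zero hg]

theorem tsum_extend_mul_pow (hg : Injective g) :
    ∑' k, extend g a 0 k * η ^ k = ∑' n, a n * η ^ g n := by
  rw [extend_mul_pow_eq hg, tsum_extend_zero hg]

end ExtendedCoefficients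

noncomputable def derivCoeff (c : ℕ → ℂ) (k : ℕ) : ℂ := (k + 1) * c (k + 1)

noncomputable def odeOp (μ : ℂ) (f : ℂ → ℂ) (η : ℂ) : ℂ :=
  (μ - η ^ 2) * deriv (deriv f) η - 2 * η * (μ - 1 - η ^ 2) * deriv f η
    + (μ + 1) * (μ - 2 - η ^ 2) * f η

/-- `extend (· + 2) u 0` is the coefficient sequence of `η ^ 2 * ∑ u j * η ^ j`; it collects the
terms of `odeOp` that carry a factor `η ^ 2`. -/
noncomputable def odeCoeff (μ : ℂ) (c : ℕ → ℂ) (k : ℕ) : ℂ :=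
  μ * derivCoeff (derivCoeff c) k - 2 * (μ - 1) * k * c k + (μ + 1) * (μ - 2) * c k
    + extend (· + 2) (fun j => 2 * j * c j - (μ + 1) * c j - derivCoeff (derivCoeff c) j) 0 k

section PowerSeries

variable {r : ℝ} {c : ℕ → ℂ}

theorem ofReal_le_radius_ofScalars (hc : ∀ η : ℂ, ‖η‖ < r → Summable fun k => c k * η ^ k) :
    ENNReal.ofReal r ≤ (ofScalars ℂ c).radius := by
  refine ENNReal.le_of_forall_nnreal_lt fun t ht => ?_
  have htr : ‖((t : ℝ) : ℂ)‖ < r := by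
    rw [Complex.norm_of_nonneg t.coe_nonneg, ← ENNReal.coe_toReal]
    exact (ENNReal.lt_ofReal_iff_toReal_lt ENNReal.coe_ne_top).1 ht
  refine le_radius_of_tendsto _ (l := 0) ?_
  simpa [ofScalars_norm] using (hc _ htr).tendsto_atTop_zero.norm

theorem hasFPowerSeriesOnBall_tsum (hr : 0 < r)
    (hc : ∀ η : ℂ, ‖η‖ < r → Summable fun k => c k * η ^ k) :
    HasFPowerSeriesOnBall (fun w => ∑' k, c k * w ^ k) (ofScalars ℂ c) 0 (ENNReal.ofReal r) := by
  have hR := ofReal_le_radius_ofScalars hc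
  refine ((ofScalars ℂ c).hasFPowerSeriesOnBall ((ENNReal.ofReal_pos.2 hr).trans_le hR)).mono
    (ENNReal.ofReal_pos.2 hr) hR |>.congr fun w _ => ?_
  simp [FormalMultilinearSeries.sum, mul_comm]

theorem mem_eball_ofReal_of_norm_lt {η : ℂ} (hη : ‖η‖ < r) :
    η ∈ Metric.eball (0 : ℂ) (ENNReal.ofReal r) := by
  rwa [mem_eball_zero_iff, ← ofReal_norm, ENNReal.ofReal_lt_ofReal_iff_of_nonneg (norm_nonneg η)]

theorem hasSum_deriv_tsum (hr : 0 < r) (hc : ∀ η : ℂ, ‖η‖ < r → Summable fun k => c k * η ^ k)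
    {η : ℂ} (hη : ‖η‖ < r) :
    HasSum (fun k => derivCoeff c k * η ^ k) (deriv (fun w => ∑' k, c k * w ^ k) η) := by
  have h := ((hasFPowerSeriesOnBall_tsum hr hc).fderiv.hasSum (mem_eball_ofReal_of_norm_lt hη)).mapL
    (ContinuousLinearMap.apply ℂ ℂ 1)
  simp only [zero_add, ContinuousLinearMap.apply_apply, fderiv_apply_one_eq_deriv,
    apply_eq_pow_smul_coeff, _root_.smul_apply, derivSeries_coeff_one,
    coeff_ofScalars, smul_eq_mul, nsmul_eq_mul] at h
  have hterm : (fun k => derivCoeff c k * η ^ k)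
      = fun k => η ^ k * (((k + 1 : ℕ) : ℂ) * c (k + 1)) := by
    funext k
    push_cast [derivCoeff]
    ring
  rw [hterm]
  exact h

theorem hasSum_deriv_deriv_tsum (hr : 0 < r)
    (hc : ∀ η : ℂ, ‖η‖ < r → Summable fun k => c k * η ^ k) {η : ℂ} (hη : ‖η‖ < r) :
    HasSum (fun k => derivCoeff (derivCoeff c) k * η ^ k)
      (deriv (deriv fun w => ∑' k, c k * w ^ k) η) := by
  have hderiv : deriv (fun w => ∑' k, c k * w ^ k) =ᶠ[nhds η]
      fun w => ∑' k, derivCoeff c k * w ^ k := by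
    filter_upwards [(isOpen_lt continuous_norm continuous_const).mem_nhds hη] with w hw
    exact (hasSum_deriv_tsum hr hc hw).tsum_eq.symm
  rw [hderiv.deriv_eq]
  exact hasSum_deriv_tsum hr (fun w hw => (hasSum_deriv_tsum hr hc hw).summable) hη

theorem eq_zero_of_hasSum_mul_pow_zero (hr : 0 < r)
    (hc : ∀ η : ℂ, ‖η‖ < r → HasSum (fun k => c k * η ^ k) 0) : c = 0 := by
  have h := hasFPowerSeriesOnBall_tsum hr fun η hη => (hc η hη).summable
  have h0 : HasFPowerSeriesOnBall 0 (ofScalars ℂ c) 0 (ENNReal.ofReal r) :=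
    h.congr fun w hw => (hc w (by simpa using hw)).tsum_eq
  exact (ofScalars_series_eq_zero ℂ).1 h0.hasFPowerSeriesAt.eq_zero

theorem hasSum_natCast_mul_mul_pow {η S : ℂ}
    (h : HasSum (fun k => derivCoeff c k * η ^ k) S) :
    HasSum (fun k => k * c k * η ^ k) (η * S) := by
  refine (hasSum_nat_add_iff' 1).1 ?_
  have hterm : (fun k : ℕ => ((k + 1 : ℕ) : ℂ) * c (k + 1) * η ^ (k + 1))
      = fun k => η * (derivCoeff c k * η ^ k) := by
    funext k
    rw [derivCoeff, Nat.cast_succ]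
    ring
  rw [Finset.sum_range_one, Nat.cast_zero, zero_mul, zero_mul, sub_zero, hterm]
  exact h.mul_left η

theorem hasSum_odeCoeff (hr : 0 < r) (μ : ℂ)
    (hc : ∀ η : ℂ, ‖η‖ < r → Summable fun k => c k * η ^ k) {η : ℂ} (hη : ‖η‖ < r) :
    HasSum (fun k => odeCoeff μ c k * η ^ k) (odeOp μ (fun w => ∑' k, c k * w ^ k) η) := by
  have h0 := (hc η hη).hasSum
  have h1 := hasSum_natCast_mul_mul_pow (hasSum_deriv_tsum hr hc hη)
  have h2 := hasSum_deriv_deriv_tsum hr hc hη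
  have hsq : HasSum (fun k => extend (· + 2) (fun j => 2 * j * c j - (μ + 1) * c j
      - derivCoeff (derivCoeff c) j) 0 k * η ^ k)
      (η ^ 2 * (2 * (η * deriv (fun w => ∑' k, c k * w ^ k) η)
        - (μ + 1) * ∑' k, c k * η ^ k - deriv (deriv fun w => ∑' k, c k * w ^ k) η)) := by
    rw [hasSum_extend_mul_pow_iff (add_left_injective 2)]
    convert! (((h1.mul_left 2).sub (h0.mul_left (μ + 1))).sub h2).mul_left (η ^ 2) using 1
    funext j
    ring
  convert! (((h2.mul_left μ).sub (h1.mul_left (2 * (μ - 1)))).add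
    (h0.mul_left ((μ + 1) * (μ - 2)))).add hsq using 1
  · funext k
    rw [odeCoeff]
    ring
  · rw [odeOp]
    ring

theorem odeOp_tsum_eq_zero_iff (hr : 0 < r) (μ : ℂ)
    (hc : ∀ η : ℂ, ‖η‖ < r → Summable fun k => c k * η ^ k) :
    (∀ η : ℂ, ‖η‖ < r → odeOp μ (fun w => ∑' k, c k * w ^ k) η = 0) ↔ ∀ k, odeCoeff μ c k = 0 := by
  constructor
  · intro h
    exact congrFun (eq_zero_of_hasSum_mul_pow_zero hr fun η hη =>
      h η hη ▸ hasSum_odeCoeff hr μ hc hη)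
  · intro h η hη
    refine (hasSum_odeCoeff hr μ hc hη).unique ?_
    simpa only [h, zero_mul] using hasSum_zero

end PowerSeries

theorem odeOp_tsum_mul_pow_eq_zero_iff {r : ℝ} (hr : 0 < r) (μ : ℂ) {g : ℕ → ℕ}
    (hg : Injective g) {a : ℕ → ℂ} (ha : ∀ η : ℂ, ‖η‖ < r → Summable fun n => a n * η ^ g n) :
    (∀ η : ℂ, ‖η‖ < r → odeOp μ (fun w => ∑' n, a n * w ^ g n) η = 0) ↔
      ∀ k, odeCoeff μ (extend g a 0) k = 0 := by
  have hf : (fun w => ∑' n, a n * w ^ g n) = fun w => ∑' k, extend g a 0 k * w ^ k :=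
    funext fun w => (tsum_extend_mul_pow hg).symm
  rw [hf]
  exact odeOp_tsum_eq_zero_iff hr μ fun η hη => (summable_extend_mul_pow_iff hg).2 (ha η hη)

section Recurrences

variable (μ : ℂ) (c : ℕ → ℂ)

theorem odeCoeff_zero : odeCoeff μ c 0 = 2 * μ * c 2 + (μ + 1) * (μ - 2) * c 0 := by
  rw [odeCoeff, extend_apply' _ _ _ fun ⟨j, hj⟩ => by omega]
  simp only [derivCoeff, Pi.zero_apply]
  push_cast
  ring

theorem odeCoeff_one : odeCoeff μ c 1 = 6 * μ * c 3 + (μ ^ 2 - 3 * μ) * c 1 := by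
  rw [odeCoeff, extend_apply' _ _ _ fun ⟨j, hj⟩ => by omega]
  simp only [derivCoeff, Pi.zero_apply]
  push_cast
  ring

theorem odeCoeff_add_two (k : ℕ) :
    odeCoeff μ c (k + 2) = μ * (k + 3) * (k + 4) * c (k + 4)
      + ((μ + 1) * (μ - 2) - 2 * (μ - 1) * (k + 2) - (k + 1) * (k + 2)) * c (k + 2)
      + (2 * k - μ - 1) * c k := by
  rw [odeCoeff, (add_left_injective 2).extend_apply]
  simp only [derivCoeff]
  push_cast
  ring

theorem odeCoeff_eq_zero_of_parity {k : ℕ} (hc : ∀ j, j % 2 = k % 2 → c j = 0) :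
    odeCoeff μ c k = 0 := by
  rcases k with _ | _ | k
  · rw [odeCoeff_zero, hc 0 rfl, hc 2 rfl]
    ring
  · rw [odeCoeff_one, hc 1 rfl, hc 3 rfl]
    ring
  · rw [odeCoeff_add_two, hc k (by omega), hc (k + 2) (by omega), hc (k + 4) (by omega)]
    ring

end Recurrences

section EvenSeries

variable (μ : ℂ) (a : ℕ → ℂ)

theorem two_mul_injective : Injective (2 * · : ℕ → ℕ) := fun _ _ h => by simpa using h

theorem odeCoeff_extend_two_mul_zero :
    odeCoeff μ (extend (2 * ·) a 0) 0 = 2 * μ * a 1 + (μ ^ 2 - μ - 2) * a 0 := by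
  rw [odeCoeff_zero, two_mul_injective.extend_apply a 0 1, two_mul_injective.extend_apply a 0 0]
  ring

theorem odeCoeff_extend_two_mul_two_mul {n : ℕ} (hn : 1 ≤ n) :
    odeCoeff μ (extend (2 * ·) a 0) (2 * n) =
      2 * μ * (2 * (n : ℂ) ^ 2 + 3 * n + 1) * a (n + 1)
        - (4 * (n : ℂ) ^ 2 + (4 * μ - 6) * n - μ ^ 2 + μ + 2) * a n
        + (4 * (n : ℂ) - 5 - μ) * a (n - 1) := by
  obtain ⟨m, rfl⟩ := Nat.exists_eq_add_of_le' hn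
  rw [show 2 * (m + 1) = 2 * m + 2 by ring, odeCoeff_add_two,
    show 2 * m + 4 = 2 * (m + 2) by ring, show 2 * m + 2 = 2 * (m + 1) by ring,
    two_mul_injective.extend_apply, two_mul_injective.extend_apply,
    two_mul_injective.extend_apply, Nat.add_sub_cancel]
  push_cast
  ring

theorem odeCoeff_extend_two_mul_eq_zero_iff :
    (∀ k, odeCoeff μ (extend (2 * ·) a 0) k = 0) ↔
      (2 * μ * a 1 + (μ ^ 2 - μ - 2) * a 0 = 0 ∧
        ∀ n : ℕ, 1 ≤ n →
          2 * μ * (2 * (n : ℂ) ^ 2 + 3 * n + 1) * a (n + 1)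
            - (4 * (n : ℂ) ^ 2 + (4 * μ - 6) * n - μ ^ 2 + μ + 2) * a n
            + (4 * (n : ℂ) - 5 - μ) * a (n - 1) = 0) := by
  rw [← odeCoeff_extend_two_mul_zero]
  refine ⟨fun h => ⟨h 0, fun n hn => odeCoeff_extend_two_mul_two_mul μ a hn ▸ h (2 * n)⟩,
    fun ⟨h0, hrec⟩ k => ?_⟩
  obtain ⟨n, rfl | rfl⟩ := Nat.even_or_odd' k
  · rcases Nat.eq_zero_or_pos n with rfl | hn
    · exact h0
    · exact (odeCoeff_extend_two_mul_two_mul μ a hn).trans (hrec n hn)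
  · exact odeCoeff_eq_zero_of_parity μ _ fun j hj =>
      extend_apply' _ _ _ (by rintro ⟨m, rfl⟩; omega)

end EvenSeries

section OddSeries

variable (μ : ℂ) (b : ℕ → ℂ)

theorem two_mul_add_one_injective : Injective (2 * · + 1 : ℕ → ℕ) :=
  fun _ _ h => by simpa using h

theorem odeCoeff_extend_two_mul_add_one_one :
    odeCoeff μ (extend (2 * · + 1) b 0) 1 = 6 * μ * b 1 + (μ ^ 2 - 3 * μ) * b 0 := by
  rw [odeCoeff_one, two_mul_add_one_injective.extend_apply b 0 1,
    two_mul_add_one_injective.extend_apply b 0 0]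

theorem odeCoeff_extend_two_mul_add_one_two_mul_add_one {n : ℕ} (hn : 1 ≤ n) :
    odeCoeff μ (extend (2 * · + 1) b 0) (2 * n + 1) =
      2 * μ * (2 * (n : ℂ) ^ 2 + 5 * n + 3) * b (n + 1)
        - (4 * (n : ℂ) ^ 2 + (4 * μ - 2) * n - μ ^ 2 + 3 * μ) * b n
        + (4 * (n : ℂ) - 3 - μ) * b (n - 1) := by
  obtain ⟨m, rfl⟩ := Nat.exists_eq_add_of_le' hn
  rw [show 2 * (m + 1) + 1 = 2 * m + 1 + 2 by ring, odeCoeff_add_two,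
    show 2 * m + 1 + 4 = 2 * (m + 2) + 1 by ring, show 2 * m + 1 + 2 = 2 * (m + 1) + 1 by ring,
    two_mul_add_one_injective.extend_apply, two_mul_add_one_injective.extend_apply,
    two_mul_add_one_injective.extend_apply, Nat.add_sub_cancel]
  push_cast
  ring

theorem odeCoeff_extend_two_mul_add_one_eq_zero_iff :
    (∀ k, odeCoeff μ (extend (2 * · + 1) b 0) k = 0) ↔
      (6 * μ * b 1 + (μ ^ 2 - 3 * μ) * b 0 = 0 ∧
        ∀ n : ℕ, 1 ≤ n →
          2 * μ * (2 * (n : ℂ) ^ 2 + 5 * n + 3) * b (n + 1)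
            - (4 * (n : ℂ) ^ 2 + (4 * μ - 2) * n - μ ^ 2 + 3 * μ) * b n
            + (4 * (n : ℂ) - 3 - μ) * b (n - 1) = 0) := by
  rw [← odeCoeff_extend_two_mul_add_one_one]
  refine ⟨fun h => ⟨h 1,
    fun n hn => odeCoeff_extend_two_mul_add_one_two_mul_add_one μ b hn ▸ h (2 * n + 1)⟩,
    fun ⟨h1, hrec⟩ k => ?_⟩
  obtain ⟨n, rfl | rfl⟩ := Nat.even_or_odd' k
  · exact odeCoeff_eq_zero_of_parity μ _ fun j hj =>
      extend_apply' _ _ _ (by rintro ⟨m, rfl⟩; omega)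
  · rcases Nat.eq_zero_or_pos n with rfl | hn
    · exact h1
    · exact (odeCoeff_extend_two_mul_add_one_two_mul_add_one μ b hn).trans (hrec n hn)

end OddSeries

theorem statement6 (μ : ℂ) (r : ℝ) (hr : 0 < r) (a b : ℕ → ℂ)
    (ha : ∀ η : ℂ, ‖η‖ < r → Summable (fun n : ℕ => a n * η ^ (2 * n)))
    (hb : ∀ η : ℂ, ‖η‖ < r → Summable (fun n : ℕ => b n * η ^ (2 * n + 1))) :
    ((∀ η : ℂ, ‖η‖ < r →
        (μ - η ^ 2) * deriv (deriv (fun w : ℂ => ∑' n : ℕ, a n * w ^ (2 * n))) η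
          - 2 * η * (μ - 1 - η ^ 2) * deriv (fun w : ℂ => ∑' n : ℕ, a n * w ^ (2 * n)) η
          + (μ + 1) * (μ - 2 - η ^ 2) * (∑' n : ℕ, a n * η ^ (2 * n)) = 0) ↔
      (2 * μ * a 1 + (μ ^ 2 - μ - 2) * a 0 = 0 ∧
        ∀ n : ℕ, 1 ≤ n →
          2 * μ * (2 * (n : ℂ) ^ 2 + 3 * n + 1) * a (n + 1)
            - (4 * (n : ℂ) ^ 2 + (4 * μ - 6) * n - μ ^ 2 + μ + 2) * a n
            + (4 * (n : ℂ) - 5 - μ) * a (n - 1) = 0)) ∧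
    ((∀ η : ℂ, ‖η‖ < r →
        (μ - η ^ 2) * deriv (deriv (fun w : ℂ => ∑' n : ℕ, b n * w ^ (2 * n + 1))) η
          - 2 * η * (μ - 1 - η ^ 2) * deriv (fun w : ℂ => ∑' n : ℕ, b n * w ^ (2 * n + 1)) η
          + (μ + 1) * (μ - 2 - η ^ 2) * (∑' n : ℕ, b n * η ^ (2 * n + 1)) = 0) ↔
      (6 * μ * b 1 + (μ ^ 2 - 3 * μ) * b 0 = 0 ∧
        ∀ n : ℕ, 1 ≤ n →
          2 * μ * (2 * (n : ℂ) ^ 2 + 5 * n + 3) * b (n + 1)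
            - (4 * (n : ℂ) ^ 2 + (4 * μ - 2) * n - μ ^ 2 + 3 * μ) * b n
            + (4 * (n : ℂ) - 3 - μ) * b (n - 1) = 0)) :=
  ⟨(odeOp_tsum_mul_pow_eq_zero_iff hr μ two_mul_injective ha).trans
      (odeCoeff_extend_two_mul_eq_zero_iff μ a),
    (odeOp_tsum_mul_pow_eq_zero_iff hr μ two_mul_add_one_injective hb).trans
      (odeCoeff_extend_two_mul_add_one_eq_zero_iff μ b)⟩
end

section
/- Let γ ∈ ℂ and b ∈ ℂ∖{0} with arg(b) ∈ (−π/4, π/4) (so that arg(b²) ∈ (−π/2, π/2)). Then, with complex powers taken in the principal branch: as z → +∞ in ℝ, ∫_1^z exp(b²·z̃²/2)·(b²·z̃²)^γ dz̃ is asymptotically equivalent to (1/b)·exp(b²·z²/2)·(b²·z²)^γ/(b·z), and ∫_1^z exp(b²·z̃²/2)·(b²·z̃²)^γ·(b·z̃) dz̃ is asymptotically equivalent to (1/b)·exp(b²·z²/2)·(b²·z²)^γ; and as z → −∞ in ℝ, the same two asymptotic equivalences hold with the integrals taken from −1 to z. -/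
/-!
Put `g(t) = exp (b²t²/2) (b²t²)^γ`. As `Re (b²) > 0`, `F = g / b` has derivative
`F'(t) = g(t) · bt · (1 + 2γ / (b²t²))`, so `∫ g(t) bt dt` differs from `F` by the
integral of `o(‖g(t) bt‖)`. Since `‖g(t)‖ = ‖(b²)^γ‖ e^{Re(b²) t²/2} t^{2 Re γ}`, a real
comparison with a derivative gives `∫ ‖g(t) bt‖ dt = O(‖F‖)` and `‖F‖ → ∞`, so that error
is `o(F)`. As `Re b > 0`, the principal square root of `b²t²` is `bt`, hence `g` with
exponent `γ - 1/2`, multiplied by `bt`, is `g` with exponent `γ`: the first asymptotic is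
the second one for `γ - 1/2`. The limits at `-∞` follow from the parity of `g`.
-/

open Complex Filter Asymptotics

open Set Topology MeasureTheory

theorem ContinuousOn.intervalIntegrable_of_Ici {E : Type*} [NormedAddCommGroup E] {f : ℝ → E}
    {a u v : ℝ} (hf : ContinuousOn f (Ici a)) (hu : a ≤ u) (hv : a ≤ v) :
    IntervalIntegrable f volume u v :=
  (hf.mono (ordConnected_Ici.uIcc_subset hu hv)).intervalIntegrable

theorem isBigO_integral_of_le_deriv {P φ φ' : ℝ → ℝ} {a : ℝ}
    (hP : ContinuousOn P (Ici a)) (hP₀ : ∀ t ∈ Ici a, 0 ≤ P t)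
    (hφ : ∀ᶠ t in atTop, HasDerivAt φ (φ' t) t ∧ P t ≤ φ' t)
    (hφ_top : Tendsto φ atTop atTop) :
    (fun z => ∫ t in a..z, P t) =O[atTop] φ := by
  obtain ⟨T, hT⟩ := eventually_atTop.1 (hφ.and (eventually_ge_atTop a))
  have haT : a ≤ T := (hT T le_rfl).2
  refine IsBigO.of_bound 2 ?_
  filter_upwards [eventually_ge_atTop T, hφ_top.eventually_ge_atTop 0,
    hφ_top.eventually_ge_atTop ((∫ t in a..T, P t) - φ T)] with z hzT hφz hφz'
  have htail : ∫ t in T..z, P t ≤ φ z - φ T := by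
    refine intervalIntegral.integral_le_sub_of_hasDeriv_right_of_le hzT
      (fun t ht => (hT t ht.1).1.1.continuousAt.continuousWithinAt)
      (fun t ht => (hT t ht.1.le).1.1.hasDerivWithinAt)
      ((hP.mono fun t ht => haT.trans ht.1).integrableOn_Icc) fun t ht => (hT t ht.1.le).1.2
  rw [Real.norm_of_nonneg hφz, Real.norm_of_nonneg (intervalIntegral.integral_nonneg
    (haT.trans hzT) fun t ht => hP₀ t ht.1),
    ← intervalIntegral.integral_add_adjacent_intervals
      (hP.intervalIntegrable_of_Ici le_rfl haT) (hP.intervalIntegrable_of_Ici haT (haT.trans hzT))]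
  linarith

theorem isLittleO_integral_mul_of_tendsto_zero {h ε G : ℝ → ℂ} {a : ℝ}
    (hh : ContinuousOn h (Ici a)) (hε : ContinuousOn ε (Ici a))
    (hε₀ : Tendsto ε atTop (𝓝 0)) (hG : Tendsto (‖G ·‖) atTop atTop)
    (hhG : (fun z => ∫ t in a..z, ‖h t‖) =O[atTop] G) :
    (fun z => ∫ t in a..z, h t * ε t) =o[atTop] G := by
  refine isLittleO_iff.2 fun c hc => ?_
  obtain ⟨C, hC, hCG⟩ := hhG.exists_pos
  have hδ : 0 < c / (2 * C) := by positivity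
  obtain ⟨T, hT⟩ := eventually_atTop.1
    (((tendsto_zero_iff_norm_tendsto_zero.1 hε₀).eventually_le_const hδ).and
      (eventually_ge_atTop a))
  have haT : a ≤ T := (hT T le_rfl).2
  have hhε : ContinuousOn (fun t => h t * ε t) (Ici a) := hh.mul hε
  filter_upwards [hCG.bound, eventually_ge_atTop T,
    (isLittleO_const_left (c := ∫ t in a..T, h t * ε t).2 (Or.inr hG)).bound (half_pos hc)]
    with z hzC hzT hzG
  have haz : a ≤ z := haT.trans hzT
  have hnorm : ∫ t in a..z, ‖h t‖ ≤ C * ‖G z‖ := (le_abs_self _).trans hzC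
  have htail : ‖∫ t in T..z, h t * ε t‖ ≤ c / (2 * C) * ∫ t in a..z, ‖h t‖ := calc
    ‖∫ t in T..z, h t * ε t‖ ≤ ∫ t in T..z, c / (2 * C) * ‖h t‖ := by
      refine intervalIntegral.norm_integral_le_of_norm_le hzT
        (ae_of_all _ fun t ht => ?_) ((hh.norm.intervalIntegrable_of_Ici haT haz).const_mul _)
      rw [norm_mul, mul_comm]
      exact mul_le_mul_of_nonneg_right (hT t ht.1.le).1 (norm_nonneg _)
    _ ≤ c / (2 * C) * ∫ t in a..z, ‖h t‖ := by
      rw [intervalIntegral.integral_const_mul]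
      gcongr
      rw [← intervalIntegral.integral_add_adjacent_intervals
        (hh.norm.intervalIntegrable_of_Ici le_rfl haT) (hh.norm.intervalIntegrable_of_Ici haT haz),
        le_add_iff_nonneg_left]
      exact intervalIntegral.integral_nonneg haT fun t _ => norm_nonneg _
  rw [← intervalIntegral.integral_add_adjacent_intervals
    (hhε.intervalIntegrable_of_Ici le_rfl haT) (hhε.intervalIntegrable_of_Ici haT haz)]
  calc _ ≤ ‖∫ t in a..T, h t * ε t‖ + ‖∫ t in T..z, h t * ε t‖ := norm_add_le _ _
    _ ≤ c / 2 * ‖G z‖ + c / (2 * C) * (C * ‖G z‖) := by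
      gcongr
      exact htail.trans (mul_le_mul_of_nonneg_left hnorm hδ.le)
    _ = c * ‖G z‖ := by field_simp; ring

theorem isEquivalent_integral_of_hasDerivAt {h ε F : ℝ → ℂ} {a : ℝ}
    (hh : ContinuousOn h (Ici a)) (hε : ContinuousOn ε (Ici a))
    (hF : ∀ t ∈ Ici a, HasDerivAt F (h t * (1 + ε t)) t) (hε₀ : Tendsto ε atTop (𝓝 0))
    (hF_top : Tendsto (‖F ·‖) atTop atTop)
    (hhF : (fun z => ∫ t in a..z, ‖h t‖) =O[atTop] F) :
    (fun z => ∫ t in a..z, h t) ~[atTop] F := by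
  have hmain : (fun z => F z - F a - ∫ t in a..z, h t * ε t) ~[atTop] F :=
    (IsEquivalent.refl.sub_isLittleO (isLittleO_const_left.2 (Or.inr hF_top))).sub_isLittleO
      (isLittleO_integral_mul_of_tendsto_zero hh hε hε₀ hF_top hhF)
  refine hmain.congr_left ?_
  filter_upwards [eventually_ge_atTop a] with z hz
  have hF' : ContinuousOn (fun t => h t * (1 + ε t)) (Ici a) :=
    hh.mul (continuousOn_const.add hε)
  have hhε : ContinuousOn (fun t => h t * ε t) (Ici a) := hh.mul hε
  rw [← intervalIntegral.integral_eq_sub_of_hasDerivAt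
    (fun t ht => hF t (ordConnected_Ici.uIcc_subset le_rfl hz ht))
    (hF'.intervalIntegrable_of_Ici le_rfl hz), ← intervalIntegral.integral_sub
    (hF'.intervalIntegrable_of_Ici le_rfl hz) (hhε.intervalIntegrable_of_Ici le_rfl hz)]
  simp only [mul_add, mul_one, add_sub_cancel_right]

theorem isEquivalent_atBot_integral_of_neg {f F : ℝ → ℂ} (s : ℂ)
    (hf : ∀ t, f (-t) = s * f t) (hF : ∀ z, F (-z) = -(s * F z))
    (h : (fun z => ∫ t in (1 : ℝ)..z, f t) ~[atTop] F) :
    (fun z => ∫ t in (-1 : ℝ)..z, f t) ~[atBot] F := by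
  refine ((IsEquivalent.refl (u := fun _ => -s)).mul
    (h.comp_tendsto tendsto_neg_atBot_atTop) |>.congr_left (.of_forall fun z => ?_)).congr_right
    (.of_forall fun z => ?_)
  · have hrefl := intervalIntegral.integral_comp_neg (a := 1) (b := -z) f
    simp only [hf, intervalIntegral.integral_const_mul, neg_neg] at hrefl
    simp only [Pi.mul_apply, Function.comp_apply]
    rw [intervalIntegral.integral_symm z, ← hrefl]
    ring
  · have hz := hF (-z)
    rw [neg_neg] at hz
    simp only [Pi.mul_apply, Function.comp_apply, hz]
    ring

namespace Real

theorem tendsto_exp_mul_sq_mul_rpow_atTop {a : ℝ} (ha : 0 < a) (q : ℝ) :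
    Tendsto (fun z : ℝ => exp (a * z ^ 2 / 2) * z ^ q) atTop atTop := by
  refine tendsto_atTop_mono' _ ?_ (tendsto_exp_mul_div_rpow_atTop (-q) (a / 2) (by positivity))
  filter_upwards [eventually_ge_atTop 1] with z hz
  rw [rpow_neg (by positivity), div_inv_eq_mul]
  gcongr
  nlinarith [mul_le_mul_of_nonneg_left (show z ≤ z ^ 2 by nlinarith) ha.le]

theorem hasDerivAt_exp_mul_sq_mul_rpow (a q : ℝ) {t : ℝ} (ht : 0 < t) :
    HasDerivAt (fun z : ℝ => exp (a * z ^ 2 / 2) * z ^ q)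
      (exp (a * t ^ 2 / 2) * t ^ q * (a * t + q / t)) t := by
  have hexp :
      HasDerivAt (fun z : ℝ => exp (a * z ^ 2 / 2)) (exp (a * t ^ 2 / 2) * (a * t)) t := by
    convert (((hasDerivAt_pow 2 t).const_mul a).div_const 2).exp using 1
    ring
  refine (hexp.mul (hasDerivAt_rpow_const (p := q) (Or.inl ht.ne'))).congr_deriv ?_
  rw [rpow_sub_one ht.ne']
  field_simp

theorem isBigO_integral_exp_mul_sq_mul_rpow {a : ℝ} (ha : 0 < a) (q : ℝ) :
    (fun z => ∫ t in (1 : ℝ)..z, exp (a * t ^ 2 / 2) * t ^ (q + 1)) =O[atTop]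
      (fun z => exp (a * z ^ 2 / 2) * z ^ q) := by
  refine IsBigO.trans ?_ ((isBigO_refl _ _).const_mul_left (2 / a))
  refine isBigO_integral_of_le_deriv
    (φ' := fun t => 2 / a * (exp (a * t ^ 2 / 2) * t ^ q * (a * t + q / t)))
    (fun t ht => (hasDerivAt_exp_mul_sq_mul_rpow a (q + 1)
      (one_pos.trans_le ht.out)).continuousAt.continuousWithinAt)
    (fun t ht => by have := one_pos.trans_le ht.out; positivity) ?_
    ((tendsto_exp_mul_sq_mul_rpow_atTop ha q).const_mul_atTop (by positivity))
  filter_upwards [eventually_ge_atTop (max 1 (2 * |q| / a))] with t ht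
  have ht₁ : 1 ≤ t := le_of_max_le_left ht
  have ht₀ : 0 < t := one_pos.trans_le ht₁
  refine ⟨(hasDerivAt_exp_mul_sq_mul_rpow a q ht₀).const_mul _, ?_⟩
  have hq : -(a * t / 2) ≤ q / t := by
    have hqt : 2 * |q| ≤ t * a := (div_le_iff₀ ha).1 (le_of_max_le_right ht)
    rw [le_div_iff₀ ht₀]
    nlinarith [neg_abs_le q, mul_le_mul_of_nonneg_left ht₁ (by positivity : 0 ≤ a * t)]
  have hψ : 0 ≤ exp (a * t ^ 2 / 2) * t ^ q := by positivity
  calc exp (a * t ^ 2 / 2) * t ^ (q + 1)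
      = 2 / a * (exp (a * t ^ 2 / 2) * t ^ q * (a * t / 2)) := by
        rw [rpow_add_one ht₀.ne']
        field_simp
    _ ≤ _ := by gcongr; linarith

end Real

noncomputable def gaussCpow (b γ : ℂ) (t : ℝ) : ℂ :=
  Complex.exp (b ^ 2 * (t : ℂ) ^ 2 / 2) * (b ^ 2 * (t : ℂ) ^ 2) ^ γ

section
variable {b : ℂ}

theorem Complex.re_sq_pos_of_arg_mem_Ioo (hb : arg b ∈ Ioo (-(Real.pi / 4)) (Real.pi / 4))
    (hb₀ : b ≠ 0) : 0 < (b ^ 2).re := by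
  have hcos : 0 < Real.cos (2 * arg b) :=
    Real.cos_pos_of_mem_Ioo ⟨by linarith [hb.1], by linarith [hb.2]⟩
  have : (b ^ 2).re = ‖b‖ ^ 2 * Real.cos (2 * arg b) := by
    rw [Real.cos_two_mul', sq b, mul_re, ← norm_mul_cos_arg b, ← norm_mul_sin_arg b]
    ring
  rw [this]
  have : 0 < ‖b‖ := norm_pos_iff.2 hb₀
  positivity

theorem gaussCpow_neg (γ : ℂ) (t : ℝ) : gaussCpow b γ (-t) = gaussCpow b γ t := by
  simp only [gaussCpow, ofReal_neg, neg_sq]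

theorem norm_gaussCpow (hb : b ≠ 0) (γ : ℂ) {t : ℝ} (ht : 0 < t) :
    ‖gaussCpow b γ t‖ =
      ‖(b ^ 2) ^ γ‖ * (Real.exp ((b ^ 2).re * t ^ 2 / 2) * t ^ (2 * γ.re)) := by
  have hb2 : b ^ 2 ≠ 0 := pow_ne_zero 2 hb
  have hu : b ^ 2 * (t : ℂ) ^ 2 = ((t ^ 2 : ℝ) : ℂ) * b ^ 2 := by push_cast; ring
  have hre : (b ^ 2 * (t : ℂ) ^ 2 / 2).re = (b ^ 2).re * t ^ 2 / 2 := by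
    rw [hu, mul_div_assoc, re_ofReal_mul, div_ofNat_re]; ring
  rw [gaussCpow, norm_mul, norm_exp, hre, hu, norm_cpow_of_ne_zero (mul_ne_zero (by
    exact_mod_cast (pow_pos ht 2).ne') hb2), norm_cpow_of_ne_zero hb2,
    arg_real_mul _ (pow_pos ht 2), norm_mul, norm_real, Real.norm_of_nonneg (by positivity),
    Real.mul_rpow (by positivity) (norm_nonneg _), ← Real.rpow_natCast,
    ← Real.rpow_mul ht.le]
  push_cast
  ring

theorem hasDerivAt_gaussCpow (hb : 0 < (b ^ 2).re) (γ : ℂ) {t : ℝ} (ht : t ≠ 0) :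
    HasDerivAt (gaussCpow b γ)
      (gaussCpow b γ t * (b ^ 2 * t) * (1 + 2 * γ / (b ^ 2 * (t : ℂ) ^ 2))) t := by
  have hu : HasDerivAt (fun z : ℝ => b ^ 2 * (z : ℂ) ^ 2) (b ^ 2 * (2 * t)) t := by
    simpa using ((hasDerivAt_id t).ofReal_comp.pow 2).const_mul (b ^ 2)
  have hslit : b ^ 2 * (t : ℂ) ^ 2 ∈ slitPlane := by
    left
    rw [← ofReal_pow, re_mul_ofReal]
    positivity
  have hne : b ^ 2 * (t : ℂ) ^ 2 ≠ 0 := slitPlane_ne_zero hslit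
  refine ((hu.div_const 2).cexp.mul
    ((hasStrictDerivAt_cpow_const hslit).hasDerivAt.comp t hu)).congr_deriv ?_
  have hb₀ : b ≠ 0 := by rintro rfl; simp at hb
  have ht' : (t : ℂ) ≠ 0 := ofReal_ne_zero.2 ht
  rw [Function.comp_apply, gaussCpow, cpow_sub _ _ hne, cpow_one]
  field_simp

theorem gaussCpow_sub_half (hb : 0 < b.re) (γ : ℂ) {t : ℝ} (ht : 0 < t) :
    gaussCpow b (γ - 2⁻¹) t = gaussCpow b γ t / (b * t) := by
  have hbt : 0 < (b * t).re := by rw [re_mul_ofReal]; positivity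
  have hne : b ^ 2 * (t : ℂ) ^ 2 ≠ 0 := by
    rw [← mul_pow]; exact pow_ne_zero 2 (ne_of_apply_ne re hbt.ne')
  rw [gaussCpow, gaussCpow, cpow_sub _ _ hne, ← mul_pow, sq_cpow_two_inv hbt, mul_div_assoc]

theorem isBigO_integral_norm_gaussCpow_mul (hb : 0 < (b ^ 2).re) (γ : ℂ) :
    (fun z => ∫ t in (1 : ℝ)..z, ‖gaussCpow b γ t * (b * t)‖) =O[atTop]
      (fun z => Real.exp ((b ^ 2).re * z ^ 2 / 2) * z ^ (2 * γ.re)) := by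
  have hb₀ : b ≠ 0 := by rintro rfl; simp at hb
  refine EventuallyEq.trans_isBigO ?_
    ((Real.isBigO_integral_exp_mul_sq_mul_rpow hb (2 * γ.re)).const_mul_left
      (‖(b ^ 2) ^ γ‖ * ‖b‖))
  filter_upwards [eventually_ge_atTop 1] with z hz
  rw [← intervalIntegral.integral_const_mul]
  refine intervalIntegral.integral_congr fun t ht => ?_
  have ht₀ : 0 < t := by rw [uIcc_of_le hz] at ht; linarith [ht.1]
  rw [norm_mul, norm_gaussCpow hb₀ γ ht₀, norm_mul, norm_real, Real.norm_of_nonneg ht₀.le,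
    Real.rpow_add_one ht₀.ne']
  ring

theorem isEquivalent_integral_gaussCpow_mul (hb : 0 < (b ^ 2).re) (γ : ℂ) :
    (fun z => ∫ t in (1 : ℝ)..z, gaussCpow b γ t * (b * t)) ~[atTop]
      fun z => b⁻¹ * gaussCpow b γ z := by
  have hb₀ : b ≠ 0 := by rintro rfl; simp at hb
  have hc : 0 < ‖b⁻¹‖ * ‖(b ^ 2) ^ γ‖ :=
    mul_pos (norm_pos_iff.2 (inv_ne_zero hb₀))
      (norm_pos_iff.2 (cpow_ne_zero_iff.2 (Or.inl (pow_ne_zero 2 hb₀))))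
  have hnorm : ∀ z : ℝ, 0 < z → ‖b⁻¹ * gaussCpow b γ z‖ =
      ‖b⁻¹‖ * ‖(b ^ 2) ^ γ‖ * (Real.exp ((b ^ 2).re * z ^ 2 / 2) * z ^ (2 * γ.re)) :=
    fun z hz => by rw [norm_mul, norm_gaussCpow hb₀ γ hz, mul_assoc]
  have hF_top : Tendsto (fun z => ‖b⁻¹ * gaussCpow b γ z‖) atTop atTop := by
    refine ((Real.tendsto_exp_mul_sq_mul_rpow_atTop hb (2 * γ.re)).const_mul_atTop hc).congr' ?_
    filter_upwards [eventually_gt_atTop 0] with z hz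
    rw [hnorm z hz]
  have hψF : (fun z => Real.exp ((b ^ 2).re * z ^ 2 / 2) * z ^ (2 * γ.re)) =O[atTop]
      fun z => b⁻¹ * gaussCpow b γ z := by
    refine IsBigO.of_bound (‖b⁻¹‖ * ‖(b ^ 2) ^ γ‖)⁻¹ ?_
    filter_upwards [eventually_gt_atTop 0] with z hz
    rw [hnorm z hz, Real.norm_of_nonneg (by positivity), inv_mul_cancel_left₀ hc.ne']
  have hε₀ : Tendsto (fun t : ℝ => 2 * γ / (b ^ 2 * (t : ℂ) ^ 2)) atTop (𝓝 0) := by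
    rw [tendsto_zero_iff_norm_tendsto_zero]
    simp only [norm_div, norm_mul, norm_pow, norm_real, Real.norm_eq_abs, sq_abs]
    exact tendsto_const_nhds.div_atTop
      ((tendsto_pow_atTop two_ne_zero).const_mul_atTop (by positivity))
  have hne : ∀ t ∈ Ici (1 : ℝ), (t : ℂ) ≠ 0 := fun t ht =>
    ofReal_ne_zero.2 (zero_lt_one.trans_le ht).ne'
  refine isEquivalent_integral_of_hasDerivAt (ε := fun t : ℝ => 2 * γ / (b ^ 2 * (t : ℂ) ^ 2))
    (fun t ht => ((hasDerivAt_gaussCpow hb γ (ofReal_ne_zero.1 (hne t ht))).continuousAt.mul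
      (by fun_prop)).continuousWithinAt)
    (continuousOn_const.div (by fun_prop) fun t ht => mul_ne_zero (pow_ne_zero 2 hb₀)
      (pow_ne_zero 2 (hne t ht)))
    (fun t ht => ((hasDerivAt_gaussCpow hb γ (ofReal_ne_zero.1 (hne t ht))).const_mul
      b⁻¹).congr_deriv ?_) hε₀ hF_top ((isBigO_integral_norm_gaussCpow_mul hb γ).trans hψF)
  have ht' := hne t ht
  field_simp

theorem isEquivalent_integral_gaussCpow (hb : 0 < b.re) (hb₂ : 0 < (b ^ 2).re) (γ : ℂ) :
    (fun z => ∫ t in (1 : ℝ)..z, gaussCpow b γ t) ~[atTop]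
      fun z => b⁻¹ * gaussCpow b γ z / (b * z) := by
  have hb₀ : b ≠ 0 := ne_of_apply_ne re hb.ne'
  refine ((isEquivalent_integral_gaussCpow_mul hb₂ (γ - 2⁻¹)).congr_left ?_).congr_right ?_
  · filter_upwards [eventually_ge_atTop 1] with z hz
    refine intervalIntegral.integral_congr fun t ht => ?_
    have ht₀ : 0 < t := by rw [uIcc_of_le hz] at ht; linarith [ht.1]
    rw [gaussCpow_sub_half hb γ ht₀,
      div_mul_cancel₀ _ (mul_ne_zero hb₀ (ofReal_ne_zero.2 ht₀.ne'))]
  · filter_upwards [eventually_gt_atTop 0] with z hz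
    rw [gaussCpow_sub_half hb γ hz, mul_div_assoc]

end

theorem statement12 (γ b : ℂ) (hb : b ≠ 0)
    (harg : Complex.arg b ∈ Set.Ioo (-(Real.pi / 4)) (Real.pi / 4)) :
    IsEquivalent atTop
      (fun z : ℝ => ∫ t in (1:ℝ)..z, Complex.exp (b ^ 2 * (t : ℂ) ^ 2 / 2) * (b ^ 2 * (t : ℂ) ^ 2) ^ γ)
      (fun z : ℝ => 1 / b * Complex.exp (b ^ 2 * (z : ℂ) ^ 2 / 2)
        * (b ^ 2 * (z : ℂ) ^ 2) ^ γ / (b * (z : ℂ))) ∧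
    IsEquivalent atTop
      (fun z : ℝ => ∫ t in (1:ℝ)..z,
        Complex.exp (b ^ 2 * (t : ℂ) ^ 2 / 2) * (b ^ 2 * (t : ℂ) ^ 2) ^ γ * (b * (t : ℂ)))
      (fun z : ℝ => 1 / b * Complex.exp (b ^ 2 * (z : ℂ) ^ 2 / 2) * (b ^ 2 * (z : ℂ) ^ 2) ^ γ) ∧
    IsEquivalent atBot
      (fun z : ℝ => ∫ t in (-1:ℝ)..z, Complex.exp (b ^ 2 * (t : ℂ) ^ 2 / 2) * (b ^ 2 * (t : ℂ) ^ 2) ^ γ)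
      (fun z : ℝ => 1 / b * Complex.exp (b ^ 2 * (z : ℂ) ^ 2 / 2)
        * (b ^ 2 * (z : ℂ) ^ 2) ^ γ / (b * (z : ℂ))) ∧
    IsEquivalent atBot
      (fun z : ℝ => ∫ t in (-1:ℝ)..z,
        Complex.exp (b ^ 2 * (t : ℂ) ^ 2 / 2) * (b ^ 2 * (t : ℂ) ^ 2) ^ γ * (b * (t : ℂ)))
      (fun z : ℝ => 1 / b * Complex.exp (b ^ 2 * (z : ℂ) ^ 2 / 2) * (b ^ 2 * (z : ℂ) ^ 2) ^ γ) := by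
  have hre : 0 < b.re := (abs_arg_lt_pi_div_two_iff.1 (abs_lt.2
    ⟨by linarith [harg.1, Real.pi_pos], by linarith [harg.2, Real.pi_pos]⟩)).resolve_right hb
  have hre₂ := re_sq_pos_of_arg_mem_Ioo harg hb
  have h₁ := isEquivalent_integral_gaussCpow hre hre₂ γ
  have h₂ := isEquivalent_integral_gaussCpow_mul hre₂ γ
  have h₃ := isEquivalent_atBot_integral_of_neg 1 (fun t => by rw [gaussCpow_neg, one_mul])
    (fun z => by rw [gaussCpow_neg, ofReal_neg]; ring) h₁
  have h₄ := isEquivalent_atBot_integral_of_neg (-1)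
    (fun t => by rw [gaussCpow_neg, ofReal_neg]; ring) (fun z => by rw [gaussCpow_neg]; ring) h₂
  simp only [gaussCpow, one_div, mul_assoc] at h₁ h₂ h₃ h₄ ⊢
  exact ⟨h₁, h₂, h₃, h₄⟩
end
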